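/- arXiv:1911.09909 — 5 statements merged into one kernel-verified Lean document; each statement's English description precedes it below -/
import Mathlib

section
/- For every oriented graph G→, the pushable chromatic number is at most the oriented chromatic number, which in turn is at most twice the pushable chromatic number: χ_p(G→) ≤ χ_o(G→) ≤ 2·χ_p(G→). -/
/-- An oriented graph: a loopless directed graph without opposite arcs. -/
structure OrientedGraph (V : Type*) where
  adj : V → V → Prop
  irrefl' : ∀ v, ¬ adj v v
  asymm' : ∀ u v, adj u v → ¬ adj v u

namespace OrientedGraph

variable {V W : Type*}

/-- Pushing a set `S` of vertices reverses every arc with exactly one endpoint in `S`. -/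
def push (G : OrientedGraph V) (S : Set V) : OrientedGraph V where
  adj u v := ((u ∈ S ↔ v ∈ S) ∧ G.adj u v) ∨ (¬(u ∈ S ↔ v ∈ S) ∧ G.adj v u)
  irrefl' v := by
    rintro (⟨_, h⟩ | ⟨h, _⟩)
    · exact G.irrefl' v h
    · exact h Iff.rfl
  asymm' u v := by
    rintro (⟨h1, h2⟩ | ⟨h1, h2⟩) (⟨h3, h4⟩ | ⟨h3, h4⟩)
    · exact G.asymm' u v h2 h4
    · exact h3 h1.symm
    · exact h1 h3.symm
    · exact G.asymm' v u h2 h4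

/-- A homomorphism of oriented graphs. -/
def IsHom (G : OrientedGraph V) (H : OrientedGraph W) (f : V → W) : Prop :=
  ∀ u v, G.adj u v → H.adj (f u) (f v)

/-- A pushable homomorphism: a homomorphism from some graph obtained from `G`
by pushing a set of vertices. -/
def IsPushableHom (G : OrientedGraph V) (H : OrientedGraph W) (f : V → W) : Prop :=
  ∃ S : Set V, IsHom (G.push S) H f

/-- The underlying (simple) undirected graph of an oriented graph. -/
def toSimpleGraph (G : OrientedGraph V) : SimpleGraph V where
  Adj u v := G.adj u v ∨ G.adj v u
  symm := ⟨fun _ _ h => Or.symm h⟩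
  loopless := ⟨fun v h => h.elim (G.irrefl' v) (G.irrefl' v)⟩

/-- The oriented chromatic number: the least order of an oriented graph that `G`
admits a homomorphism to. -/
noncomputable def orientedChromatic (G : OrientedGraph V) : ℕ :=
  sInf {n | ∃ (H : OrientedGraph (Fin n)) (f : V → Fin n), IsHom G H f}

/-- The pushable chromatic number: the least order of an oriented graph that `G`
admits a pushable homomorphism to. -/
noncomputable def pushableChromatic (G : OrientedGraph V) : ℕ :=
  sInf {n | ∃ (H : OrientedGraph (Fin n)) (f : V → Fin n), IsPushableHom G H f}

/-- `signedAdj C true u w` means `w ∈ N⁺(u)`; `signedAdj C false u w` means `w ∈ N⁻(u)`. -/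
def signedAdj (C : OrientedGraph V) : Bool → V → V → Prop
  | true, u, w => C.adj u w
  | false, u, w => C.adj w u

/-- The `s`-neighborhood of a set of vertices. -/
def signedNbhd (C : OrientedGraph V) (s : Bool) (S : Set V) : Set V :=
  {w | ∃ u ∈ S, C.signedAdj s u w}

/-- The set `N^a(J)` for a sign vector `a` and a tuple `v` of vertices. -/
def NSet (C : OrientedGraph V) {j : ℕ} (a : Fin j → Bool) (v : Fin j → V) : Set V :=
  {w | (∀ i, C.signedAdj (a i) (v i) w) ∨ (∀ i, C.signedAdj (!(a i)) (v i) w)}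

/-- Property `P(j,k)`: for every sign vector `a ∈ {+,-}^j` and every set of `j`
distinct vertices, `|N^a(J)| ≥ k`. -/
def HasPropP (C : OrientedGraph V) (j k : ℕ) : Prop :=
  ∀ (a : Fin j → Bool) (v : Fin j → V), Function.Injective v → k ≤ (C.NSet a v).ncard

end OrientedGraph

/-- The Paley tournament on `ZMod 7`: `ij` is an arc iff `j - i ∈ {1, 2, 4}`. -/
def Pal7 : OrientedGraph (ZMod 7) where
  adj i j := j - i = 1 ∨ j - i = 2 ∨ j - i = 4
  irrefl' := by decide
  asymm' := by decide

/-- `mad(G) < 3`: every nonempty subgraph `H` satisfies `2|E(H)|/|V(H)| < 3`. -/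
def MadLT3 {V : Type*} (G : SimpleGraph V) : Prop :=
  ∀ H : G.Subgraph, H.verts.Nonempty → 2 * H.edgeSet.ncard < 3 * H.verts.ncard

/-- Degeneracy at most `d`: every nonempty set of vertices contains a vertex with
at most `d` neighbors inside the set. -/
def DegeneracyLE {V : Type*} (G : SimpleGraph V) (d : ℕ) : Prop :=
  ∀ s : Set V, s.Nonempty → ∃ v ∈ s, (s ∩ G.neighborSet v).ncard ≤ d

/-! A homomorphism is a pushable homomorphism pushing nothing. Conversely, if pushing
`S` turns `G` into a graph with a homomorphism `f` to `H`, then `v ↦ (f v, v ∈ S)` is a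
homomorphism from `G` to the double cover of `H`: two copies of `H` in which the arcs between
the copies are reversed. This cover is itself obtained by pushing one copy, and pushing the
same set twice changes nothing. -/

theorem Nat.sInf_le_sInf_and_sInf_le_mul {A B : Set ℕ} {c : ℕ} (hAB : A ⊆ B)
    (hBA : ∀ n ∈ B, c * n ∈ A) : sInf B ≤ sInf A ∧ sInf A ≤ c * sInf B := by
  rcases B.eq_empty_or_nonempty with rfl | hB
  · simp [Set.subset_empty_iff.mp hAB]
  have hA : c * sInf B ∈ A := hBA _ (Nat.sInf_mem hB)
  exact ⟨Nat.sInf_le (hAB (Nat.sInf_mem ⟨_, hA⟩)), Nat.sInf_le hA⟩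

namespace OrientedGraph

variable {U V W : Type*}

theorem ext {G H : OrientedGraph V} (h : G.adj = H.adj) : G = H := by
  cases G; cases H; congr

def comap (H : OrientedGraph W) (f : U → W) : OrientedGraph U where
  adj u v := H.adj (f u) (f v)
  irrefl' u := H.irrefl' (f u)
  asymm' u v := H.asymm' (f u) (f v)

theorem isHom_comap_iff {G : OrientedGraph V} {H : OrientedGraph W} {f : U → W} {g : V → U} :
    IsHom G (H.comap f) g ↔ IsHom G H (f ∘ g) := Iff.rfl

@[simp]
theorem push_empty (G : OrientedGraph V) : G.push ∅ = G :=
  ext <| by funext u v; simp [push]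

@[simp]
theorem push_push (G : OrientedGraph V) (S : Set V) : (G.push S).push S = G :=
  ext <| by funext u v; simp only [push]; by_cases u ∈ S <;> by_cases v ∈ S <;> simp_all

theorem IsHom.push {G : OrientedGraph V} {H : OrientedGraph W} {f : V → W} (hf : IsHom G H f)
    (T : Set W) : IsHom (G.push (f ⁻¹' T)) (H.push T) f := by
  rintro u v (⟨huv, h⟩ | ⟨huv, h⟩)
  exacts [Or.inl ⟨huv, hf u v h⟩, Or.inr ⟨huv, hf v u h⟩]

theorem IsHom.isPushableHom {G : OrientedGraph V} {H : OrientedGraph W} {f : V → W}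
    (hf : IsHom G H f) : IsPushableHom G H f :=
  ⟨∅, by rwa [push_empty]⟩

theorem IsHom.exists_fin {G : OrientedGraph V} {H : OrientedGraph W} {f : V → W} {n : ℕ}
    (hf : IsHom G H f) (e : W ≃ Fin n) :
    ∃ (H' : OrientedGraph (Fin n)) (g : V → Fin n), IsHom G H' g :=
  ⟨H.comap e.symm, e ∘ f, isHom_comap_iff.mpr <| by simpa [Function.comp_def] using hf⟩

def doubleCover (H : OrientedGraph W) : OrientedGraph (W × Bool) :=
  (H.comap Prod.fst).push {p | p.2}

theorem isHom_doubleCover_of_isHom_push {G : OrientedGraph V} {H : OrientedGraph W} {f : V → W}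
    {S : Set V} [DecidablePred (· ∈ S)] (hf : IsHom (G.push S) H f) :
    IsHom G H.doubleCover fun v => (f v, decide (v ∈ S)) := by
  have hcomap : IsHom (G.push S) (H.comap Prod.fst) fun v => (f v, decide (v ∈ S)) :=
    isHom_comap_iff.mpr hf
  have hpreimage : (fun v => (f v, decide (v ∈ S))) ⁻¹' {p : W × Bool | p.2} = S := by
    ext; simp
  simpa only [hpreimage, push_push, doubleCover] using hcomap.push {p | p.2}

end OrientedGraph

theorem pushable_le_oriented_le_two_mul_pushable_general
    (V : Type) (G : OrientedGraph V) :
    G.pushableChromatic ≤ G.orientedChromatic ∧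
      G.orientedChromatic ≤ 2 * G.pushableChromatic := by
  refine Nat.sInf_le_sInf_and_sInf_le_mul
    (fun n ⟨H, f, hf⟩ => ⟨H, f, OrientedGraph.IsHom.isPushableHom hf⟩) ?_
  rintro n ⟨H, f, S, hf⟩
  classical
  exact (OrientedGraph.isHom_doubleCover_of_isHom_push hf).exists_fin
    (Fintype.equivFinOfCardEq (by simp [mul_comm]))

/-- For every oriented graph `G`, `χ_p(G) ≤ χ_o(G) ≤ 2 χ_p(G)`. -/
theorem pushable_le_oriented_le_two_mul_pushable
    (V : Type) [Fintype V] (G : OrientedGraph V) :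
    G.pushableChromatic ≤ G.orientedChromatic ∧
      G.orientedChromatic ≤ 2 * G.pushableChromatic :=
  pushable_le_oriented_le_two_mul_pushable_general V G
end

section
/- For every integer Δ ≥ 29, there exist a connected finite simple graph G with maximum degree at most Δ and an orientation G→ of G whose oriented chromatic number satisfies χ_o(G→) ≥ 2^(Δ/2) (as a real-number inequality). -/
/-
An orientation of a graph with a homomorphism `f` to an oriented graph `H` on `c` vertices is
recovered from `H` and `f`: the arc `uv` points from `u` to `v` iff `f u f v` is an arc of `H`.
So at most `2 ^ (c²) c ^ |V|` of the `2 ^ |E|` orientations of a graph have oriented chromatic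
number at most `c`. Two circulants `C_N(1, …, m)` joined by `r ∈ {1, 2}` shifted matchings form a
connected graph of maximum degree `Δ = 2m + r` with `2N` vertices and `ΔN` edges. For
`2 ^ Δ = a + 1`, `c² ≤ a` and `N = a (a + 1)`, Bernoulli's inequality gives
`2 ^ (c²) c ^ (2N) < 2 ^ (ΔN)`, so some orientation has `χ_o > √a`, i.e. `χ_o ≥ 2 ^ (Δ / 2)`.
-/
namespace OrientedGraph

variable {U V W : Type*}

def map (f : V ↪ W) (G : OrientedGraph V) : OrientedGraph W where
  adj x y := ∃ u v, G.adj u v ∧ f u = x ∧ f v = y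
  irrefl' := by
    rintro _ ⟨u, v, huv, rfl, hvu⟩
    exact G.irrefl' u (f.injective hvu ▸ huv)
  asymm' := by
    rintro _ _ ⟨u, v, huv, rfl, rfl⟩ ⟨v', u', hvu, hv, hu⟩
    rw [f.injective hv, f.injective hu] at hvu
    exact G.asymm' u v huv hvu

lemma isHom_map (f : V ↪ W) (G : OrientedGraph V) : G.IsHom (G.map f) f :=
  fun u v h => ⟨u, v, h, rfl, rfl⟩

lemma IsHom.comp {G : OrientedGraph U} {H : OrientedGraph V} {K : OrientedGraph W}
    {f : U → V} {g : V → W} (hg : H.IsHom K g) (hf : G.IsHom H f) : G.IsHom K (g ∘ f) :=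
  fun u v h => hg _ _ (hf u v h)

lemma exists_isHom_fin_card [Fintype V] (G : OrientedGraph V) :
    ∃ (H : OrientedGraph (Fin (Fintype.card V))) (f : V → Fin (Fintype.card V)), G.IsHom H f :=
  ⟨_, _, G.isHom_map (Fintype.equivFin V).toEmbedding⟩

lemma IsHom.exists_isHom_of_le {G : OrientedGraph V} {a b : ℕ} {H : OrientedGraph (Fin a)}
    {f : V → Fin a} (hf : G.IsHom H f) (hab : a ≤ b) :
    ∃ (H' : OrientedGraph (Fin b)) (f' : V → Fin b), G.IsHom H' f' :=
  ⟨_, _, (H.isHom_map (Fin.castLEEmb hab)).comp hf⟩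

lemma exists_isHom_of_orientedChromatic_le [Finite V] {G : OrientedGraph V} {c : ℕ}
    (h : G.orientedChromatic ≤ c) :
    ∃ (H : OrientedGraph (Fin c)) (f : V → Fin c), G.IsHom H f := by
  have := Fintype.ofFinite V
  have hne : {n | ∃ (H : OrientedGraph (Fin n)) (f : V → Fin n), G.IsHom H f}.Nonempty :=
    ⟨_, G.exists_isHom_fin_card⟩
  obtain ⟨H, f, hf⟩ := Nat.sInf_mem hne
  exact hf.exists_isHom_of_le h

end OrientedGraph

/-- A simple graph on `V` with a reference orientation, its edges indexed by `E`. -/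
structure ArcFamily (V E : Type*) where
  src : E → V
  dst : E → V
  src_ne_dst : ∀ e, src e ≠ dst e
  injective_edge : Function.Injective fun e => s(src e, dst e)

namespace ArcFamily

variable {V W E : Type*} (A : ArcFamily V E)

def edge (e : E) : Sym2 V := s(A.src e, A.dst e)

def graph : SimpleGraph V where
  Adj x y := ∃ e, A.edge e = s(x, y)
  symm := ⟨fun _ _ ⟨e, he⟩ => ⟨e, he.trans Sym2.eq_swap⟩⟩
  loopless := ⟨fun x ⟨e, he⟩ => A.src_ne_dst e <| by
    obtain ⟨h₁, h₂⟩ | ⟨h₁, h₂⟩ := Sym2.eq_iff.mp he <;> rw [h₁, h₂]⟩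

/-- `A.orient b` keeps the arc `e` when `b e` and reverses it otherwise. -/
def tail (b : E → Bool) (e : E) : V := if b e then A.src e else A.dst e

def head (b : E → Bool) (e : E) : V := if b e then A.dst e else A.src e

lemma edge_eq_mk_tail_head (b : E → Bool) (e : E) : A.edge e = s(A.tail b e, A.head b e) := by
  unfold tail head
  cases b e
  · exact Sym2.eq_swap
  · rfl

lemma tail_ne_head (b : E → Bool) (e : E) : A.tail b e ≠ A.head b e := by
  unfold tail head
  cases b e
  · exact (A.src_ne_dst e).symm
  · exact A.src_ne_dst e

def orient (b : E → Bool) : OrientedGraph V where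
  adj x y := ∃ e, A.tail b e = x ∧ A.head b e = y
  irrefl' x := fun ⟨e, hx, hy⟩ => A.tail_ne_head b e (hx.trans hy.symm)
  asymm' x y := by
    rintro ⟨e, rfl, rfl⟩ ⟨e', hy, hx⟩
    obtain rfl : e = e' := A.injective_edge <| by
      change A.edge e = A.edge e'
      rw [A.edge_eq_mk_tail_head b, A.edge_eq_mk_tail_head b, hy, hx]
      exact Sym2.eq_swap
    exact A.tail_ne_head b e hx.symm

lemma toSimpleGraph_orient (b : E → Bool) : (A.orient b).toSimpleGraph = A.graph := by
  ext x y
  constructor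
  · rintro (⟨e, rfl, rfl⟩ | ⟨e, rfl, rfl⟩)
    · exact ⟨e, A.edge_eq_mk_tail_head b e⟩
    · exact ⟨e, (A.edge_eq_mk_tail_head b e).trans Sym2.eq_swap⟩
  · rintro ⟨e, he⟩
    rw [A.edge_eq_mk_tail_head b] at he
    obtain ⟨hx, hy⟩ | ⟨hy, hx⟩ := Sym2.eq_iff.mp he
    exacts [Or.inl ⟨e, hx, hy⟩, Or.inr ⟨e, hy, hx⟩]

lemma eq_true_iff_adj_of_isHom {b : E → Bool} {H : OrientedGraph W} {f : V → W}
    (hf : (A.orient b).IsHom H f) (e : E) :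
    b e = true ↔ H.adj (f (A.src e)) (f (A.dst e)) := by
  have harc := hf _ _ ⟨e, rfl, rfl⟩
  cases hb : b e <;> simp only [tail, head, hb, Bool.false_eq_true, if_false, if_true] at harc
  · exact ⟨nofun, fun h => (H.asymm' _ _ harc h).elim⟩
  · exact iff_of_true rfl harc

theorem exists_lt_orientedChromatic [Fintype V] [Fintype E] {c : ℕ}
    (h : 2 ^ (c * c) * c ^ Fintype.card V < 2 ^ Fintype.card E) :
    ∃ b, c < (A.orient b).orientedChromatic := by
  classical
  by_contra! hle
  have hsurj : Function.Surjective fun p : (Fin c → Fin c → Bool) × (V → Fin c) =>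
      fun e => p.1 (p.2 (A.src e)) (p.2 (A.dst e)) := by
    intro b
    obtain ⟨H, f, hf⟩ := OrientedGraph.exists_isHom_of_orientedChromatic_le (hle b)
    refine ⟨(fun p q => decide (H.adj p q), f), funext fun e => ?_⟩
    change decide (H.adj _ _) = b e
    rw [Bool.eq_iff_iff, decide_eq_true_iff, A.eq_true_iff_adj_of_isHom hf e]
  have hcard := Fintype.card_le_of_surjective _ hsurj
  simp only [Fintype.card_fun, Fintype.card_prod, Fintype.card_bool, Fintype.card_fin,
    ← pow_mul] at hcard
  omega

end ArcFamily

lemma ZMod.eq_of_natCast_eq_natCast_of_lt {n a b : ℕ} (ha : a < n) (hb : b < n)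
    (h : (a : ZMod n) = b) : a = b := by
  rwa [ZMod.natCast_eq_natCast_iff', Nat.mod_eq_of_lt ha, Nat.mod_eq_of_lt hb] at h

lemma SimpleGraph.reachable_of_forall_adj_add_one {V : Type*} {G : SimpleGraph V} {n : ℕ}
    [NeZero n] {f : ZMod n → V} (hf : ∀ u, G.Adj (f u) (f (u + 1))) (u : ZMod n) :
    G.Reachable (f 0) (f u) := by
  have hnat (k : ℕ) : G.Reachable (f 0) (f k) := by
    induction k with
    | zero => simp
    | succ k ih =>
      push_cast
      exact ih.trans (hf k).reachable
  simpa using hnat u.val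

namespace DoubleCirculant

variable {n m r : ℕ}

/-- Each layer `ZMod n × {s}` carries the circulant arcs `u → u + (i + 1)` for `i < m`, and the
arcs `(u, false) → (u + j, true)` for `j < r` join the two layers. -/
abbrev Arc (n m r : ℕ) := (ZMod n × Bool × Fin m) ⊕ (ZMod n × Fin r)

def src : Arc n m r → ZMod n × Bool
  | .inl (u, s, _) => (u, s)
  | .inr (u, _) => (u, false)

def dst : Arc n m r → ZMod n × Bool
  | .inl (u, s, i) => (u + ((i + 1 : ℕ) : ZMod n), s)
  | .inr (u, j) => (u + ((j : ℕ) : ZMod n), true)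

lemma src_ne_dst (h2m : 2 * m < n) (e : Arc n m r) : src e ≠ dst e := by
  rcases e with ⟨u, s, i⟩ | ⟨u, j⟩
  · intro h
    have h0 : ((i + 1 : ℕ) : ZMod n) = ((0 : ℕ) : ZMod n) := by
      simpa [src, dst] using h
    have := ZMod.eq_of_natCast_eq_natCast_of_lt (by omega) (by omega) h0
    omega
  · simp [src, dst]

lemma eq_of_src_eq_of_dst_eq (h2m : 2 * m < n) (hr : r ≤ n) {e e' : Arc n m r}
    (h₁ : src e = src e') (h₂ : dst e = dst e') : e = e' := by
  rcases e with ⟨u, s, i⟩ | ⟨u, j⟩ <;> rcases e' with ⟨u', s', i'⟩ | ⟨u', j'⟩ <;>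
    simp only [src, dst, Prod.mk.injEq] at h₁ h₂
  · obtain ⟨rfl, rfl⟩ := h₁
    have := ZMod.eq_of_natCast_eq_natCast_of_lt (by omega) (by omega) (add_left_cancel h₂.1)
    simp only [Sum.inl.injEq, Prod.mk.injEq, true_and]
    omega
  · simp_all
  · simp_all
  · obtain ⟨rfl, -⟩ := h₁
    have := ZMod.eq_of_natCast_eq_natCast_of_lt (by omega) (by omega) (add_left_cancel h₂.1)
    simp only [Sum.inr.injEq, Prod.mk.injEq, true_and]
    omega

lemma not_src_eq_dst_of_dst_eq_src (h2m : 2 * m < n) {e e' : Arc n m r}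
    (h₁ : src e = dst e') (h₂ : dst e = src e') : False := by
  rcases e with ⟨u, s, i⟩ | ⟨u, j⟩ <;> rcases e' with ⟨u', s', i'⟩ | ⟨u', j'⟩ <;>
    simp only [src, dst, Prod.mk.injEq] at h₁ h₂
  · have h0 : ((i + 1 + (i' + 1) : ℕ) : ZMod n) = ((0 : ℕ) : ZMod n) := by
      have := h₁.1
      rw [← h₂.1] at this
      push_cast at this ⊢
      linear_combination -this
    have := ZMod.eq_of_natCast_eq_natCast_of_lt (by omega) (by omega) h0
    omega
  all_goals simp_all

def arcs (h2m : 2 * m < n) (hr : r ≤ n) : ArcFamily (ZMod n × Bool) (Arc n m r) where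
  src := src
  dst := dst
  src_ne_dst := src_ne_dst h2m
  injective_edge e e' h := by
    obtain ⟨h₁, h₂⟩ | ⟨h₁, h₂⟩ := Sym2.eq_iff.mp h
    · exact eq_of_src_eq_of_dst_eq h2m hr h₁ h₂
    · exact (not_src_eq_dst_of_dst_eq_src h2m h₁ h₂).elim

def neighbor (x : ZMod n × Bool) : Fin m × Bool ⊕ Fin r → ZMod n × Bool
  | .inl (i, true) => (x.1 + ((i + 1 : ℕ) : ZMod n), x.2)
  | .inl (i, false) => (x.1 - ((i + 1 : ℕ) : ZMod n), x.2)
  | .inr j => if x.2 then (x.1 - (j : ℕ), false) else (x.1 + (j : ℕ), true)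

lemma neighborSet_subset_range (h2m : 2 * m < n) (hr : r ≤ n) (x : ZMod n × Bool) :
    (arcs h2m hr).graph.neighborSet x ⊆ Set.range (neighbor (m := m) (r := r) x) := by
  rintro y ⟨e, he⟩
  obtain ⟨rfl, rfl⟩ | ⟨rfl, rfl⟩ := Sym2.eq_iff.mp he
  · rcases e with ⟨u, s, i⟩ | ⟨u, j⟩
    exacts [⟨.inl (i, true), rfl⟩, ⟨.inr j, rfl⟩]
  · rcases e with ⟨u, s, i⟩ | ⟨u, j⟩
    · exact ⟨.inl (i, false), by simp [neighbor, arcs, src, dst]⟩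
    · exact ⟨.inr j, by simp [neighbor, arcs, src, dst]⟩

lemma ncard_neighborSet_le (h2m : 2 * m < n) (hr : r ≤ n) (x : ZMod n × Bool) :
    ((arcs h2m hr).graph.neighborSet x).ncard ≤ 2 * m + r :=
  calc ((arcs h2m hr).graph.neighborSet x).ncard
      ≤ (Set.range (neighbor (m := m) (r := r) x)).ncard :=
        Set.ncard_le_ncard (neighborSet_subset_range h2m hr x) (Set.finite_range _)
    _ ≤ Nat.card (Fin m × Bool ⊕ Fin r) := by
        rw [← Nat.card_coe_set_eq]
        exact Finite.card_range_le _
    _ = 2 * m + r := by simp [mul_comm]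

lemma connected (h2m : 2 * m < n) (hr : r ≤ n) (hm : 0 < m) (hr0 : 0 < r) :
    (arcs h2m hr).graph.Connected := by
  have : NeZero n := ⟨by omega⟩
  have hlayer (s : Bool) (u : ZMod n) : (arcs h2m hr).graph.Reachable (0, s) (u, s) :=
    SimpleGraph.reachable_of_forall_adj_add_one (G := (arcs h2m hr).graph) (f := fun u => (u, s))
      (fun u => ⟨.inl (u, s, ⟨0, hm⟩), by simp [ArcFamily.edge, arcs, src, dst]⟩) u
  have hrung : (arcs h2m hr).graph.Adj (0, false) (0, true) :=
    ⟨.inr (0, ⟨0, hr0⟩), by simp [ArcFamily.edge, arcs, src, dst]⟩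
  refine (SimpleGraph.connected_iff_exists_forall_reachable _).mpr ⟨(0, false), ?_⟩
  rintro ⟨u, _ | _⟩
  · exact hlayer false u
  · exact hrung.reachable.trans (hlayer true u)

lemma card_arc [NeZero n] : Fintype.card (Arc n m r) = n * (2 * m + r) := by
  simp only [Fintype.card_sum, Fintype.card_prod, ZMod.card, Fintype.card_bool, Fintype.card_fin]
  ring

end DoubleCirculant

lemma pow_add_mul_pow_le_add_one_pow (a k : ℕ) :
    a ^ (k + 1) + (k + 1) * a ^ k ≤ (a + 1) ^ (k + 1) := by
  induction k with
  | zero => simp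
  | succ k ih =>
    rw [pow_succ (a + 1)]
    nlinarith [Nat.zero_le (a ^ k), pow_succ a k, pow_succ a (k + 1)]

lemma two_mul_pow_self_le_add_one_pow {a : ℕ} (ha : 0 < a) : 2 * a ^ a ≤ (a + 1) ^ a := by
  obtain ⟨k, rfl⟩ : ∃ k, a = k + 1 := ⟨a - 1, by omega⟩
  have := pow_add_mul_pow_le_add_one_pow (k + 1) k
  rwa [← pow_succ', ← two_mul] at this

/-- The exponent `N = a (a + 1)` is chosen so that Bernoulli's `(1 + 1/a) ^ a ≥ 2`, raised to the
power `a + 1`, beats the factor `2 ^ a`. -/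
lemma two_pow_mul_pow_lt_pow {a c : ℕ} (ha : 0 < a) (hc : c * c ≤ a) :
    2 ^ (c * c) * c ^ (a * (a + 1) * 2) < (a + 1) ^ (a * (a + 1)) :=
  calc 2 ^ (c * c) * c ^ (a * (a + 1) * 2)
      = 2 ^ (c * c) * (c * c) ^ (a * (a + 1)) := by rw [mul_comm _ 2, pow_mul c, sq]
    _ ≤ 2 ^ a * a ^ (a * (a + 1)) := by gcongr; norm_num
    _ < 2 ^ (a + 1) * a ^ (a * (a + 1)) := by gcongr <;> omega
    _ = (2 * a ^ a) ^ (a + 1) := by rw [mul_pow, ← pow_mul]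
    _ ≤ ((a + 1) ^ a) ^ (a + 1) := by gcongr; exact two_mul_pow_self_le_add_one_pow ha
    _ = (a + 1) ^ (a * (a + 1)) := by rw [← pow_mul]

lemma rpow_div_two_le_of_pow_le_sq {x y : ℝ} {k : ℕ} (hx : 0 ≤ x) (hy : 0 ≤ y)
    (h : x ^ k ≤ y ^ 2) : x ^ ((k : ℝ) / 2) ≤ y := by
  have hsq : (x ^ ((k : ℝ) / 2)) ^ 2 = x ^ k := by
    rw [← Real.rpow_mul_natCast hx, ← Real.rpow_natCast]
    congr 1
    push_cast
    ring
  exact (pow_le_pow_iff_left₀ (by positivity) hy two_ne_zero).mp (hsq ▸ h)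

/-- For every `Δ ≥ 29`, there is a connected finite simple graph with maximum degree
at most `Δ` and an orientation of it with oriented chromatic number at least
`2^(Δ/2)`. -/
theorem orientedChromatic_lower_of_maxDegree
    (Δ : ℕ) (hΔ : 29 ≤ Δ) :
    ∃ (V : Type) (_ : Fintype V) (G : SimpleGraph V) (G' : OrientedGraph V),
      G.Connected ∧ (∀ v, (G.neighborSet v).ncard ≤ Δ) ∧ G'.toSimpleGraph = G ∧
      (2 : ℝ) ^ ((Δ : ℝ) / 2) ≤ (G'.orientedChromatic : ℝ) := by
  obtain ⟨m, r, hm, hr0, hmr⟩ : ∃ m r, 0 < m ∧ 0 < r ∧ 2 * m + r = Δ :=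
    ⟨(Δ - 1) / 2, 2 - Δ % 2, by omega, by omega, by omega⟩
  obtain ⟨a, ha⟩ : ∃ a, 2 ^ Δ = a + 1 := ⟨2 ^ Δ - 1, (Nat.sub_add_cancel Nat.one_le_two_pow).symm⟩
  have hΔa : Δ < a + 1 := ha ▸ Nat.lt_two_pow_self
  have hN : a + 1 ≤ a * (a + 1) := Nat.le_mul_of_pos_left _ (by omega)
  have : NeZero (a * (a + 1)) := ⟨by omega⟩
  let A := DoubleCirculant.arcs (n := a * (a + 1)) (m := m) (r := r) (by omega) (by omega)
  obtain ⟨b, hb⟩ := A.exists_lt_orientedChromatic (c := Nat.sqrt a) <| by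
    rw [Fintype.card_prod, ZMod.card, Fintype.card_bool, DoubleCirculant.card_arc, hmr,
      mul_comm _ Δ, pow_mul 2 Δ, ha]
    exact two_pow_mul_pow_lt_pow (by omega) (Nat.sqrt_le a)
  refine ⟨_, inferInstance, A.graph, A.orient b, DoubleCirculant.connected _ _ hm hr0,
    fun x => hmr ▸ DoubleCirculant.ncard_neighborSet_le _ _ x, A.toSimpleGraph_orient b, ?_⟩
  have hsq : 2 ^ Δ ≤ (A.orient b).orientedChromatic ^ 2 := by
    have := Nat.sqrt_lt'.mp hb
    omega
  exact rpow_div_two_le_of_pow_le_sq zero_le_two (Nat.cast_nonneg _) (by exact_mod_cast hsq)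
end

section
/- For every integer t ≥ 29, there exists a tournament on exactly (t−3)·(t−1)·2^(t−1) vertices that has Property P(t−1, t−1). -/
/-!
Orient every pair of vertices by a coin flip `f : Sym2 V → Bool`. For fixed signs `a` and
distinct `v₁, …, vⱼ`, a vertex `w` outside `J` lies in `N^a(J)` iff the `j` flips on the pairs
`{vᵢ, w}` form one of two patterns, and these flips are disjoint for distinct `w`. So the
colourings with `|N^a(J)| < k` number a binomial tail `∑_{i<k} C(N-j,i) 2^i (2^j-2)^(N-j-i)`
times the free flips, and a union bound over the `2^j N^j` choices of `(a, J)` leaves a good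
colouring once this tail is small. For `j = k = t - 1` and `N = (t-3)(t-1)2^(t-1)` that comes
down to `(1 + 1/r)^r ≥ 2` for `r = 2^(t-2) - 1` together with `2^8 t^4 ≤ 2^t`.
-/

open Finset

theorem card_filter_comp_mul_card_pow {α ι β : Type*} [Fintype α] [Fintype ι] [Fintype β]
    [DecidableEq α] [DecidableEq ι] {c : ι → α} (hc : Function.Injective c)
    (P : (ι → β) → Prop) [DecidablePred P] :
    #{f : α → β | P (f ∘ c)} * Fintype.card β ^ Fintype.card ι =
      #{g : ι → β | P g} * Fintype.card β ^ Fintype.card α := by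
  classical
  let e : (α → β) ≃ (ι → β) × ({x // x ∉ Set.range c} → β) :=
    (Equiv.piEquivPiSubtypeProd (· ∈ Set.range c) _).trans
      ((Equiv.arrowCongr (Equiv.ofInjective c hc).symm (Equiv.refl β)).prodCongr (Equiv.refl _))
  have he : ∀ f, (e f).1 = f ∘ c := fun f => rfl
  have hcompl : Fintype.card {x // x ∉ Set.range c} + Fintype.card ι = Fintype.card α := by
    rw [Fintype.card_subtype_compl, ← Fintype.card_congr (Equiv.ofInjective c hc)]
    have := Fintype.card_le_of_injective c hc
    omega
  rw [← Fintype.card_subtype, ← Fintype.card_subtype,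
    Fintype.card_congr ((e.subtypeEquiv fun f => by rw [he]).trans
      (Equiv.prodSubtypeFstEquivSubtypeProd (p := P))),
    Fintype.card_prod, Fintype.card_fun, mul_assoc, ← pow_add, hcompl]

section

variable {W B : Type*} [Fintype W] [DecidableEq W] [Fintype B] [DecidableEq B]

theorem card_filter_filter_mem_eq (A : W → Finset B) {a : ℕ} (hA : ∀ w, #(A w) = a)
    (S : Finset W) :
    #{G : W → B | ({w | G w ∈ A w} : Finset W) = S} =
      a ^ #S * (Fintype.card B - a) ^ (Fintype.card W - #S) := by
  have hfilter : ({G : W → B | ({w | G w ∈ A w} : Finset W) = S} : Finset _) =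
      Fintype.piFinset fun w => if w ∈ S then A w else (A w)ᶜ := by
    ext G
    simp only [mem_filter, mem_univ, true_and, Fintype.mem_piFinset, Finset.ext_iff]
    refine forall_congr' fun w => ?_
    split_ifs with hw <;> simp [hw]
  have hcard : ∀ w,
      #(if w ∈ S then A w else (A w)ᶜ) = if w ∈ S then a else Fintype.card B - a :=
    fun w => by split_ifs <;> simp [card_compl, hA]
  rw [hfilter, Fintype.card_piFinset, prod_congr rfl fun w _ => hcard w, prod_ite, prod_const,
    prod_const, ← card_compl, compl_eq_univ_sdiff, filter_mem_eq_inter, univ_inter]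
  simp [filter_not]

theorem card_filter_card_filter_mem_lt (A : W → Finset B) {a : ℕ} (hA : ∀ w, #(A w) = a)
    (k : ℕ) :
    #{G : W → B | #({w | G w ∈ A w} : Finset W) < k} =
      ∑ i ∈ range k, (Fintype.card W).choose i * a ^ i *
        (Fintype.card B - a) ^ (Fintype.card W - i) := by
  rw [card_eq_sum_card_fiberwise (f := fun G => #({w | G w ∈ A w} : Finset W)) (t := range k)
    fun G hG => by simpa using hG]
  refine sum_congr rfl fun i hi => ?_
  rw [filter_filter, card_eq_sum_card_fiberwise (f := fun G => ({w | G w ∈ A w} : Finset W))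
    (t := powersetCard i univ) fun G hG => by simp_all]
  rw [sum_congr rfl fun S hS => ?_, sum_const, card_powersetCard, card_univ, smul_eq_mul, mul_assoc]
  rw [mem_powersetCard] at hS
  rw [← hS.2, ← card_filter_filter_mem_eq A hA S, filter_filter]
  congr 1
  refine filter_congr fun G _ => ⟨fun h => h.2, fun h => ⟨⟨?_, ?_⟩, h⟩⟩ <;>
    simp_all [mem_range]

end

theorem exists_forall_not_of_sum_card_filter_lt {F I : Type*} [Fintype F] [Fintype I]
    (Bad : I → F → Prop) [∀ i, DecidablePred (Bad i)]
    (h : ∑ i, #{f | Bad i f} < Fintype.card F) : ∃ f, ∀ i, ¬ Bad i f := by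
  classical
  rw [← card_univ] at h
  obtain ⟨f, -, hf⟩ := exists_mem_notMem_of_card_lt_card (card_biUnion_le.trans_lt h)
  exact ⟨f, fun i hi =>
    hf (mem_biUnion.2 ⟨i, mem_univ _, mem_filter.2 ⟨mem_univ _, hi⟩⟩)⟩

theorem sum_range_choose_mul_pow_le {m k a b : ℕ} (hk : k ≤ m + 1) (hb : b ≤ a * m) :
    ∑ i ∈ range k, m.choose i * a ^ i * b ^ (m - i) ≤
      k * ((a * m) ^ (k - 1) * b ^ (m + 1 - k)) := by
  calc ∑ i ∈ range k, m.choose i * a ^ i * b ^ (m - i)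
      ≤ ∑ _i ∈ range k, (a * m) ^ (k - 1) * b ^ (m + 1 - k) := by
        refine sum_le_sum fun i hi => ?_
        have hi : i < k := mem_range.1 hi
        calc m.choose i * a ^ i * b ^ (m - i)
            ≤ m ^ i * a ^ i * (b ^ (k - 1 - i) * b ^ (m + 1 - k)) := by
              rw [← pow_add, show k - 1 - i + (m + 1 - k) = m - i by omega]
              gcongr
              exact Nat.choose_le_pow m i
          _ ≤ (a * m) ^ i * ((a * m) ^ (k - 1 - i) * b ^ (m + 1 - k)) := by
              rw [mul_comm (m ^ i), ← mul_pow]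
              gcongr
          _ = (a * m) ^ (k - 1) * b ^ (m + 1 - k) := by
              rw [← mul_assoc, ← pow_add, show i + (k - 1 - i) = k - 1 by omega]
    _ = k * ((a * m) ^ (k - 1) * b ^ (m + 1 - k)) := by
        rw [sum_const, card_range, smul_eq_mul]

theorem two_pow_mul_pow_le_succ_pow {r k s : ℕ} (hr : 0 < r) (h : k * r ≤ s) :
    2 ^ k * r ^ s ≤ (r + 1) ^ s := by
  obtain ⟨d, rfl⟩ := Nat.exists_eq_add_of_le h
  have bernoulli : 2 * r ^ r ≤ (r + 1) ^ r := by
    have := pow_add_mul_le_add_pow (a := r) (b := 1) (Nat.zero_le r) (Nat.zero_le _) r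
    rwa [Nat.cast_id, mul_one, mul_pow_sub_one hr.ne', ← two_mul] at this
  calc 2 ^ k * r ^ (k * r + d) = (2 * r ^ r) ^ k * r ^ d := by ring
    _ ≤ ((r + 1) ^ r) ^ k * (r + 1) ^ d := by gcongr; omega
    _ = (r + 1) ^ (k * r + d) := by ring

theorem two_pow_eight_mul_pow_four_le_two_pow {t : ℕ} (ht : 28 ≤ t) :
    2 ^ 8 * t ^ 4 ≤ 2 ^ t := by
  induction t, ht using Nat.le_induction with
  | base => norm_num
  | succ t ht ih =>
    have h3 : 28 * t ^ 3 ≤ t ^ 4 := by rw [pow_succ _ 3, mul_comm]; gcongr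
    have h2 : t ^ 2 ≤ t ^ 3 := Nat.pow_le_pow_right (by omega) (by omega)
    have h1 : t ≤ t ^ 2 := Nat.le_self_pow (by omega) t
    calc 2 ^ 8 * (t + 1) ^ 4 ≤ 2 * (2 ^ 8 * t ^ 4) := by nlinarith
      _ ≤ 2 ^ (t + 1) := by rw [pow_succ]; omega

theorem succ_mul_pow_lt_two_pow {i A : ℕ} (hi : 26 ≤ i) (hA : A + 1 = i ^ 2) :
    (i + 1) * (A * 2 ^ (i + 2)) ^ (2 * i + 1) < 2 ^ (i * (i + 1) + 2 * A) := by
  have hA0 : 0 < A := by nlinarith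
  have hAsq : 2 ^ 8 * A ^ 2 ≤ 2 ^ (i + 2) := by
    have hAt : A ≤ (i + 2) ^ 2 := by nlinarith
    calc 2 ^ 8 * A ^ 2 ≤ 2 ^ 8 * (i + 2) ^ 4 := by rw [show 4 = 2 * 2 by rfl, pow_mul]; gcongr
      _ ≤ 2 ^ (i + 2) := two_pow_eight_mul_pow_four_le_two_pow (by omega)
  have hpow : A ^ (2 * i + 1) * 2 ^ (8 * (i + 1)) ≤ (2 ^ 8 * A ^ 2) ^ (i + 1) := by
    rw [mul_pow, ← pow_mul, ← pow_mul, mul_comm]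
    gcongr
    · omega
  -- after scaling by `2 ^ (8 * (i + 1))`, each `A ^ 2` absorbs a factor `2 ^ 8`
  refine Nat.lt_of_mul_lt_mul_right (a := 2 ^ (8 * (i + 1))) ?_
  calc (i + 1) * (A * 2 ^ (i + 2)) ^ (2 * i + 1) * 2 ^ (8 * (i + 1))
      = (i + 1) * (A ^ (2 * i + 1) * 2 ^ (8 * (i + 1))) * 2 ^ ((i + 2) * (2 * i + 1)) := by
        rw [mul_pow, ← pow_mul]; ring
    _ < 2 ^ (i + 1) * (2 ^ 8 * A ^ 2) ^ (i + 1) * 2 ^ ((i + 2) * (2 * i + 1)) :=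
        Nat.mul_lt_mul_of_pos_right (Nat.mul_lt_mul_of_lt_of_le Nat.lt_two_pow_self hpow
          (pow_pos (Nat.mul_pos (by norm_num) (pow_pos hA0 2)) _)) (by positivity)
    _ ≤ 2 ^ (i + 1) * (2 ^ (i + 2)) ^ (i + 1) * 2 ^ ((i + 2) * (2 * i + 1)) := by gcongr
    _ ≤ 2 ^ (i * (i + 1) + 2 * A) * 2 ^ (8 * (i + 1)) := by
        simp only [← pow_mul, ← pow_add]
        exact Nat.pow_le_pow_right (by norm_num) (by nlinarith)

theorem two_pow_mul_pow_mul_sum_choose_lt {t : ℕ} (ht : 28 ≤ t) :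
    2 ^ (t - 1) * ((t - 3) * (t - 1) * 2 ^ (t - 1)) ^ (t - 1) *
      ∑ i ∈ range (t - 1), ((t - 3) * (t - 1) * 2 ^ (t - 1) - (t - 1)).choose i * 2 ^ i *
        (2 ^ (t - 1) - 2) ^ ((t - 3) * (t - 1) * 2 ^ (t - 1) - (t - 1) - i) <
      2 ^ ((t - 1) * ((t - 3) * (t - 1) * 2 ^ (t - 1) - (t - 1))) := by
  obtain ⟨i, rfl⟩ : ∃ i, t = i + 2 := ⟨t - 2, by omega⟩
  obtain ⟨A, hAdef, hA⟩ : ∃ A, (i - 1) * (i + 1) = A ∧ A + 1 = i ^ 2 := by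
    refine ⟨_, rfl, ?_⟩
    rcases i with _ | l
    · omega
    · simp only [Nat.add_sub_cancel]; ring
  obtain ⟨r, hr⟩ : ∃ r, 2 ^ i = r + 1 :=
    ⟨2 ^ i - 1, (Nat.sub_add_cancel Nat.one_le_two_pow).symm⟩
  have hr0 : 0 < r := by have := Nat.one_lt_two_pow (n := i) (by omega); omega
  have h2i : 2 ^ (i + 1) = 2 * (r + 1) := by rw [pow_succ, hr, mul_comm]
  rw [show i + 2 - 1 = i + 1 by omega, show i + 2 - 3 = i - 1 by omega, hAdef,
    show 2 ^ (i + 1) - 2 = 2 * r by omega]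
  set N := A * 2 ^ (i + 1) with hN
  set m := N - (i + 1) with hm
  set s := m + 1 - (i + 1) with hs
  have hNr : N = 2 * (A * r) + 2 * A := by rw [hN, h2i]; ring
  have hAi : 2 * i + 1 ≤ 2 * A := by nlinarith
  have hrA : r ≤ A * r := Nat.le_mul_of_pos_left r (by nlinarith)
  have hmi : m = i + s := by omega
  have hsum := sum_range_choose_mul_pow_le (m := m) (k := i + 1) (a := 2) (b := 2 * r)
    (by omega) (by omega)
  rw [Nat.add_sub_cancel, ← hs] at hsum
  have hgeom : 2 ^ (2 * A) * (2 * r) ^ s ≤ (2 ^ (i + 1)) ^ s := by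
    have hAr : 2 * A * r ≤ s := by rw [mul_assoc]; omega
    calc 2 ^ (2 * A) * (2 * r) ^ s = 2 ^ s * (2 ^ (2 * A) * r ^ s) := by ring
      _ ≤ 2 ^ s * (r + 1) ^ s := by gcongr; exact two_pow_mul_pow_le_succ_pow hr0 hAr
      _ = (2 ^ (i + 1)) ^ s := by rw [h2i, mul_pow]
  have hmain : 2 ^ (i + 1) * N ^ (i + 1) * ((i + 1) * (2 * m) ^ i) < 2 ^ (i * (i + 1) + 2 * A) :=
    calc 2 ^ (i + 1) * N ^ (i + 1) * ((i + 1) * (2 * m) ^ i)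
        ≤ 2 ^ (i + 1) * N ^ (i + 1) * ((i + 1) * (2 * N) ^ i) := by gcongr; omega
      _ = (i + 1) * (A * 2 ^ (i + 2)) ^ (2 * i + 1) := by
          rw [hN]; simp only [mul_pow, ← pow_mul]; ring_nf
      _ < 2 ^ (i * (i + 1) + 2 * A) := succ_mul_pow_lt_two_pow (by omega) hA
  calc 2 ^ (i + 1) * N ^ (i + 1) * ∑ k ∈ range (i + 1), m.choose k * 2 ^ k * (2 * r) ^ (m - k)
      ≤ 2 ^ (i + 1) * N ^ (i + 1) * ((i + 1) * ((2 * m) ^ i * (2 * r) ^ s)) := by gcongr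
    _ = 2 ^ (i + 1) * N ^ (i + 1) * ((i + 1) * (2 * m) ^ i) * (2 * r) ^ s := by ring
    _ < 2 ^ (i * (i + 1) + 2 * A) * (2 * r) ^ s :=
        Nat.mul_lt_mul_of_pos_right hmain (pow_pos (by omega) _)
    _ ≤ 2 ^ (i * (i + 1)) * (2 ^ (i + 1)) ^ s := by rw [pow_add, mul_assoc]; gcongr
    _ = 2 ^ ((i + 1) * m) := by rw [← pow_mul, ← pow_add, hmi]; ring_nf

namespace OrientedGraph

variable {V : Type*} [LinearOrder V]

def tournamentOf (f : Sym2 V → Bool) : OrientedGraph V where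
  adj u w := u ≠ w ∧ f s(u, w) = decide (u < w)
  irrefl' _ h := h.1 rfl
  asymm' u w h h' := by
    rw [Sym2.eq_swap, h.2] at h'
    rcases lt_or_gt_of_ne h.1 with huw | hwu
    · simp [huw, huw.not_gt] at h'
    · simp [hwu, hwu.not_gt] at h'

variable (f : Sym2 V → Bool) {u w : V}

theorem tournamentOf_adj_or_adj (huw : u ≠ w) :
    (tournamentOf f).adj u w ∨ (tournamentOf f).adj w u := by
  simp only [tournamentOf, Sym2.eq_swap (a := w), ne_eq, huw, not_false_eq_true, true_and,
    Ne.symm huw]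
  rcases lt_or_gt_of_ne huw with h | h <;> cases f s(u, w) <;> simp [h, h.not_gt]

theorem signedAdj_tournamentOf_iff (huw : u ≠ w) (b : Bool) :
    (tournamentOf f).signedAdj b u w ↔ f s(u, w) = xor (decide (w < u)) b := by
  rcases lt_or_gt_of_ne huw with h | h <;> cases b <;>
    simp [signedAdj, tournamentOf, huw, Ne.symm huw, h, h.not_gt, Sym2.eq_swap (a := w)]

theorem mem_NSet_tournamentOf_iff {j : ℕ} (a : Fin j → Bool) (v : Fin j → V)
    (hw : w ∉ Set.range v) :
    w ∈ (tournamentOf f).NSet a v ↔ (fun i => f s(v i, w)) ∈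
      ({fun i => xor (decide (w < v i)) (a i), fun i => !xor (decide (w < v i)) (a i)} :
        Finset (Fin j → Bool)) := by
  have hne : ∀ i, v i ≠ w := fun i h => hw ⟨i, h⟩
  change (∀ i, _) ∨ (∀ i, _) ↔ _
  simp only [signedAdj_tournamentOf_iff f (hne _), Bool.bne_not, mem_insert, mem_singleton,
    funext_iff]

variable [Fintype V]

theorem card_filter_ncard_NSet_lt_mul_le {j : ℕ} (hj : 0 < j) (k : ℕ) (a : Fin j → Bool)
    {v : Fin j → V} (hv : Function.Injective v) :
    #{f : Sym2 V → Bool | ((tournamentOf f).NSet a v).ncard < k} *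
        2 ^ (j * (Fintype.card V - j)) ≤
      (∑ i ∈ range k, (Fintype.card V - j).choose i * 2 ^ i *
        (2 ^ j - 2) ^ (Fintype.card V - j - i)) * 2 ^ Fintype.card (Sym2 V) := by
  classical
  let W := {w // w ∉ Set.range v}
  have hW : Fintype.card W = Fintype.card V - j := by
    rw [Fintype.card_subtype_compl, ← Fintype.card_congr (Equiv.ofInjective v hv),
      Fintype.card_fin]
  let c : W × Fin j → Sym2 V := fun x => s(v x.2, x.1)
  have hc : Function.Injective c := by
    rintro ⟨w, i⟩ ⟨w', i'⟩ h
    rcases Sym2.eq_iff.1 h with ⟨hi, hw⟩ | ⟨hi, -⟩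
    · exact Prod.ext (Subtype.ext hw) (hv hi)
    · exact absurd ⟨i, hi⟩ w'.2
  let σ : W → Fin j → Bool := fun w i => xor (decide (w.1 < v i)) (a i)
  let A : W → Finset (Fin j → Bool) := fun w => {σ w, fun i => !σ w i}
  have hA : ∀ w, #(A w) = 2 := fun w => card_pair fun h => by
    simpa using congr_fun h ⟨0, hj⟩
  let P : (W × Fin j → Bool) → Prop := fun g => #{w | (fun i => g (w, i)) ∈ A w} < k
  have hbad : ∀ f : Sym2 V → Bool, ((tournamentOf f).NSet a v).ncard < k → P (f ∘ c) := by
    refine fun f hf => lt_of_le_of_lt ?_ hf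
    rw [← card_map (Function.Embedding.subtype _), ← Set.ncard_coe_finset]
    refine Set.ncard_le_ncard ?_ (Set.toFinite _)
    intro w hw
    simp only [coe_map, Set.mem_image, mem_coe, mem_filter, mem_univ, true_and] at hw
    obtain ⟨w, hw, rfl⟩ := hw
    exact (mem_NSet_tournamentOf_iff f a v w.2).2 hw
  calc #{f : Sym2 V → Bool | ((tournamentOf f).NSet a v).ncard < k} *
        2 ^ (j * (Fintype.card V - j))
      ≤ #{f : Sym2 V → Bool | P (f ∘ c)} * Fintype.card Bool ^ Fintype.card (W × Fin j) := by
        rw [Fintype.card_bool, Fintype.card_prod, hW, Fintype.card_fin, mul_comm j]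
        exact Nat.mul_le_mul_right _ (card_le_card (monotone_filter_right _ fun f _ => hbad f))
    _ = #{g : W × Fin j → Bool | P g} * 2 ^ Fintype.card (Sym2 V) := by
        convert card_filter_comp_mul_card_pow hc P using 3
        exact Fintype.card_bool.symm
    _ = _ := by
        rw [card_equiv (Equiv.curry W (Fin j) Bool) (t := {G | #{w | G w ∈ A w} < k})
          (fun g => by simp only [mem_filter, mem_univ, true_and]; rfl),
          card_filter_card_filter_mem_lt A hA, hW]
        simp

theorem exists_tournamentOf_hasPropP {j k : ℕ} (hj : 0 < j)
    (h : 2 ^ j * Fintype.card V ^ j * ∑ i ∈ range k, (Fintype.card V - j).choose i * 2 ^ i *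
        (2 ^ j - 2) ^ (Fintype.card V - j - i) < 2 ^ (j * (Fintype.card V - j))) :
    ∃ f : Sym2 V → Bool, (tournamentOf f).HasPropP j k := by
  classical
  set S := ∑ i ∈ range k, (Fintype.card V - j).choose i * 2 ^ i *
    (2 ^ j - 2) ^ (Fintype.card V - j - i)
  let Bad : (Fin j → Bool) × (Fin j → V) → (Sym2 V → Bool) → Prop := fun p f =>
    Function.Injective p.2 ∧ ((tournamentOf f).NSet p.1 p.2).ncard < k
  have hBad : ∀ p, #{f | Bad p f} * 2 ^ (j * (Fintype.card V - j)) ≤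
      S * 2 ^ Fintype.card (Sym2 V) := by
    rintro ⟨a, v⟩
    by_cases hv : Function.Injective v
    · refine le_trans (Nat.mul_le_mul_right _ (card_le_card ?_))
        (card_filter_ncard_NSet_lt_mul_le hj k a hv)
      exact monotone_filter_right _ fun f _ hf => hf.2
    · simp [Bad, hv]
  obtain ⟨f, hf⟩ := exists_forall_not_of_sum_card_filter_lt Bad <|
    Nat.lt_of_mul_lt_mul_right (a := 2 ^ (j * (Fintype.card V - j))) <| calc
      (∑ p, #{f | Bad p f}) * 2 ^ (j * (Fintype.card V - j))
        ≤ ∑ _p : (Fin j → Bool) × (Fin j → V), S * 2 ^ Fintype.card (Sym2 V) := by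
          rw [sum_mul]; exact sum_le_sum fun p _ => hBad p
      _ = 2 ^ j * Fintype.card V ^ j * S * 2 ^ Fintype.card (Sym2 V) := by
          simp [mul_assoc]
      _ < 2 ^ (j * (Fintype.card V - j)) * 2 ^ Fintype.card (Sym2 V) :=
          Nat.mul_lt_mul_of_pos_right h (by positivity)
      _ = Fintype.card (Sym2 V → Bool) * 2 ^ (j * (Fintype.card V - j)) := by
          simp [mul_comm]
  exact ⟨f, fun a v hv => not_lt.1 fun hlt => hf (a, v) ⟨hv, hlt⟩⟩

end OrientedGraph

/-- For every `t ≥ 29`, there is a tournament on exactly `(t-3)(t-1)·2^(t-1)` vertices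
having Property `P(t-1, t-1)`. -/
theorem exists_tournament_hasPropP (t : ℕ) (ht : 29 ≤ t) :
    ∃ C : OrientedGraph (Fin ((t - 3) * (t - 1) * 2 ^ (t - 1))),
      (∀ u v, u ≠ v → C.adj u v ∨ C.adj v u) ∧ C.HasPropP (t - 1) (t - 1) := by
  obtain ⟨f, hf⟩ := OrientedGraph.exists_tournamentOf_hasPropP (V := Fin _) (k := t - 1)
    (by omega : 0 < t - 1)
    (by simpa only [Fintype.card_fin] using two_pow_mul_pow_mul_sum_choose_lt (by omega : 28 ≤ t))
  exact ⟨_, fun u v => OrientedGraph.tournamentOf_adj_or_adj f, hf⟩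
end

section
/- Every oriented graph whose underlying simple graph G satisfies mad(G) < 3 admits a pushable homomorphism to the Paley tournament Pal_7. -/
/-!
A pushable homomorphism to `Pal7` is a homomorphism to the anti-twinned tournament on
`ZMod 7 × Bool`, the second coordinate recording whether a vertex is pushed. By computation,
in this 14-vertex target every signed neighbourhood has 6 vertices, no two vertices have exactly
one common signed neighbour, and for fixed signs and a colour `c` at most one colour has no
common signed neighbour with `c`. These properties let a colouring extend over a reducible star,
a vertex `u` with a set `T` of neighbours of degree 2 and few other neighbours: recolour `u`
avoiding the at most `#T` colours ruled out through the second neighbours of `T`, then colour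
`T`. Discharging shows that `mad < 3` forces a reducible star in every nonempty vertex set.
-/

open Finset

namespace OrientedGraph

variable {V W : Type*}

def antiTwin (H : OrientedGraph W) : OrientedGraph (W × Bool) where
  adj x y := if x.2 = y.2 then H.adj x.1 y.1 else H.adj y.1 x.1
  irrefl' x := by
    rw [if_pos rfl]
    exact H.irrefl' x.1
  asymm' x y := by
    by_cases h : x.2 = y.2
    · rw [if_pos h, if_pos h.symm]
      exact H.asymm' x.1 y.1
    · rw [if_neg h, if_neg (Ne.symm h)]
      exact H.asymm' y.1 x.1

instance [DecidableEq W] (H : OrientedGraph W) [DecidableRel H.adj] :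
    DecidableRel H.antiTwin.adj :=
  fun x y => inferInstanceAs (Decidable (if x.2 = y.2 then H.adj x.1 y.1 else H.adj y.1 x.1))

instance (C : OrientedGraph W) [DecidableRel C.adj] : ∀ b, DecidableRel (C.signedAdj b)
  | true => fun x y => inferInstanceAs (Decidable (C.adj x y))
  | false => fun x y => inferInstanceAs (Decidable (C.adj y x))

theorem IsHom.isPushableHom_fst {G : OrientedGraph V} {H : OrientedGraph W} {f : V → W × Bool}
    (hf : G.IsHom H.antiTwin f) : G.IsPushableHom H (Prod.fst ∘ f) := by
  refine ⟨{v | (f v).2}, ?_⟩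
  rintro u v (⟨huv, h⟩ | ⟨huv, h⟩)
  · have hside : (f u).2 = (f v).2 := Bool.eq_iff_iff.2 huv
    simpa only [antiTwin, if_pos hside, Function.comp_apply] using hf u v h
  · have hside : (f v).2 ≠ (f u).2 := fun h => huv (Bool.eq_iff_iff.1 h.symm)
    simpa only [antiTwin, if_neg hside, Function.comp_apply] using hf v u h

end OrientedGraph

namespace SimpleGraph

variable {V : Type*} (G : SimpleGraph V) [DecidableRel G.Adj]

def degIn (s : Finset V) (x : V) : ℕ := #{y ∈ s | G.Adj x y}

theorem sum_degIn_lt_of_madLT3 [Fintype V] (hG : MadLT3 G) {s : Finset V} (hs : s.Nonempty) :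
    ∑ x ∈ s, G.degIn s x < 3 * #s := by
  classical
  let H : G.Subgraph := (⊤ : G.Subgraph).induce s
  have hdeg : ∀ x, H.spanningCoe.degree x = if x ∈ s then G.degIn s x else 0 := by
    intro x
    split_ifs with hx
    · simp only [← card_neighborFinset_eq_degree, degIn, neighborFinset_eq_filter]
      congr 1
      ext y
      simp [H, hx]
    · simp [← card_neighborFinset_eq_degree, neighborFinset_eq_filter, H, hx]
  have hsum : ∑ x ∈ s, G.degIn s x = 2 * H.edgeSet.ncard := by
    rw [← Subgraph.edgeSet_spanningCoe, ← coe_edgeFinset, Set.ncard_coe_finset,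
      ← sum_degrees_eq_twice_card_edges, ← sum_filter_add_sum_filter_not univ (· ∈ s)]
    simp [hdeg]
  simpa [hsum, H] using hG H (by simpa [H] using hs)

theorem exists_eq_or_eq_of_degIn_eq_two [DecidableEq V] {s : Finset V} {w u : V}
    (hw : G.degIn s w = 2) (hu : u ∈ s) (hwu : G.Adj w u) :
    ∃ z ∈ s, G.Adj w z ∧ z ≠ u ∧ ∀ q ∈ s, G.Adj w q → q = u ∨ q = z := by
  have hone : #({y ∈ s | G.Adj w y}.erase u) = 1 := by
    rw [card_erase_of_mem (by simp [hu, hwu])]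
    simp only [degIn] at hw
    omega
  obtain ⟨z, hz⟩ := card_eq_one.1 hone
  have hzmem : z ∈ ({y ∈ s | G.Adj w y}.erase u) := hz ▸ mem_singleton_self z
  simp only [mem_erase, mem_filter] at hzmem
  refine ⟨z, hzmem.2.1, hzmem.2.2, hzmem.1, fun q hq hwq => or_iff_not_imp_left.2 fun hqu => ?_⟩
  have hqmem : q ∈ ({y ∈ s | G.Adj w y}.erase u) := by simp [hq, hwq, hqu]
  simpa [hz] using hqmem

/-- Discharging: each vertex of degree 2 takes 1/2 from each of its (degree ≥ 3) neighbours. -/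
theorem exists_two_mul_degIn_le {s : Finset V} (hsum : ∑ x ∈ s, G.degIn s x < 3 * #s)
    (hmin : ∀ x ∈ s, 2 ≤ G.degIn s x)
    (hno : ∀ x ∈ s, ∀ y ∈ s, G.Adj x y → G.degIn s x = 2 → G.degIn s y ≠ 2) :
    ∃ u ∈ s, 3 ≤ G.degIn s u ∧ 2 * G.degIn s u ≤ #{y ∈ s | G.Adj u y ∧ G.degIn s y = 2} + 5 := by
  by_contra! hcon
  set s₂ := {x ∈ s | G.degIn s x = 2}
  set s₃ := {x ∈ s | G.degIn s x ≠ 2}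
  have hnbr₂ : ∀ u, #{y ∈ s | G.Adj u y ∧ G.degIn s y = 2} = #{y ∈ s₂ | G.Adj u y} := by
    intro u
    simp only [s₂, filter_filter, and_comm]
  have hnbr₃ : ∀ x ∈ s₂, #{u ∈ s₃ | G.Adj u x} = 2 := by
    intro x hx
    obtain ⟨hxs, hx2⟩ := mem_filter.1 hx
    rw [← hx2, degIn, filter_filter]
    congr 1
    refine filter_congr fun y hy => ⟨fun h => h.2.symm, fun h => ⟨hno x hxs y hy h hx2, h.symm⟩⟩
  have hcount : ∑ u ∈ s₃, #{y ∈ s₂ | G.Adj u y} = 2 * #s₂ := by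
    have := sum_card_bipartiteAbove_eq_sum_card_bipartiteBelow (s := s₃) (t := s₂) (r := G.Adj)
    simp only [bipartiteAbove, bipartiteBelow] at this
    rw [this, sum_congr rfl hnbr₃, sum_const, smul_eq_mul, mul_comm]
  have hlarge : ∑ u ∈ s₃, (#{y ∈ s₂ | G.Adj u y} + 6) ≤ ∑ u ∈ s₃, 2 * G.degIn s u := by
    refine sum_le_sum fun u hu => ?_
    obtain ⟨hus, hu2⟩ := mem_filter.1 hu
    have := hcon u hus (by have := hmin u hus; omega)
    rw [← hnbr₂]
    omega
  have hsplit : ∑ x ∈ s, G.degIn s x = 2 * #s₂ + ∑ x ∈ s₃, G.degIn s x := by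
    rw [← sum_filter_add_sum_filter_not s (fun x => G.degIn s x = 2),
      sum_congr rfl fun x hx => (mem_filter.1 hx).2, sum_const, smul_eq_mul, mul_comm]
  have hcard : #s₂ + #s₃ = #s := card_filter_add_card_filter_not _
  rw [sum_add_distrib, hcount, sum_const, smul_eq_mul, ← mul_sum] at hlarge
  omega

/-- The bounds on `t = #T` and on the number `r` of other neighbours of `u` are what the
extension needs: for `r ≤ 1` at least `6 > t` colours suit `u`, and for `r = 2` deleting a vertex
of `T` keeps `u` coloured, so that its colour and one more suit `u`, while `t ≤ 1`. -/
def IsReducibleStar [DecidableEq V] (s : Finset V) (u : V) (T : Finset V) : Prop :=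
  u ∈ s ∧ T ⊆ {y ∈ s | G.Adj u y} ∧
    (∀ w ∈ T, ∃ z ∈ s \ insert u T, G.Adj w z ∧ ∀ q ∈ s, G.Adj w q → q = u ∨ q = z) ∧
    #T + 2 * #({y ∈ s | G.Adj u y} \ T) ≤ 5 ∧ #({y ∈ s | G.Adj u y} \ T) ≤ #T + 1

theorem exists_isReducibleStar [Fintype V] [DecidableEq V] (hG : MadLT3 G) {s : Finset V}
    (hs : s.Nonempty) : ∃ u T, G.IsReducibleStar s u T := by
  by_cases hlow : ∃ v ∈ s, G.degIn s v ≤ 1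
  · obtain ⟨v, hv, hd⟩ := hlow
    have hR : #({y ∈ s | G.Adj v y} \ ∅) ≤ 1 := by rwa [sdiff_empty]
    exact ⟨v, ∅, hv, empty_subset _, by simp, by rw [card_empty]; omega, by rw [card_empty]; omega⟩
  by_cases hpair : ∃ v ∈ s, ∃ w ∈ s, G.Adj v w ∧ G.degIn s v = 2 ∧ G.degIn s w = 2
  · obtain ⟨v, hv, w, hw, hvw, hdv, hdw⟩ := hpair
    obtain ⟨a, ha, hva, haw, hvonly⟩ := G.exists_eq_or_eq_of_degIn_eq_two hdv hw hvw
    have hR : #({y ∈ s | G.Adj w y} \ {v}) = 1 := by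
      rw [card_sdiff_of_subset (by simp [hv, hvw.symm])]
      simp only [degIn] at hdw
      simp [hdw]
    refine ⟨w, {v}, hw, by simp [hv, hvw.symm], ?_, by simp [hR], by simp [hR]⟩
    simp only [mem_singleton, forall_eq]
    exact ⟨a, by simp [ha, haw, hva.ne'], hva, hvonly⟩
  push Not at hlow hpair
  obtain ⟨u, hu, hd3, hdt⟩ := G.exists_two_mul_degIn_le (G.sum_degIn_lt_of_madLT3 hG hs)
    hlow hpair
  set T := {y ∈ s | G.Adj u y ∧ G.degIn s y = 2}
  have hTsub : T ⊆ {y ∈ s | G.Adj u y} := fun y hy => by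
    simp only [T, mem_filter] at hy ⊢
    exact ⟨hy.1, hy.2.1⟩
  have hR : #({y ∈ s | G.Adj u y} \ T) = G.degIn s u - #T := by
    rw [card_sdiff_of_subset hTsub, degIn]
  have hTcard : #T ≤ G.degIn s u := card_le_card hTsub
  refine ⟨u, T, hu, hTsub, fun w hw => ?_, by omega, by omega⟩
  obtain ⟨hws, huw, hw2⟩ := mem_filter.1 hw
  obtain ⟨z, hz, hwz, hzu, hwonly⟩ := G.exists_eq_or_eq_of_degIn_eq_two hw2 hu huw.symm
  have hzT : z ∉ T := fun h => hpair w hws z hz hwz hw2 (mem_filter.1 h).2.2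
  exact ⟨z, by simp [hz, hzu, hzT], hwz, hwonly⟩

end SimpleGraph

namespace OrientedGraph

variable {V W : Type*}

def RespectsArcs (G : OrientedGraph V) (K : OrientedGraph W) (p q : V) (x y : W) : Prop :=
  (G.adj p q → K.adj x y) ∧ (G.adj q p → K.adj y x)

def IsHomOn (G : OrientedGraph V) (K : OrientedGraph W) (s : Finset V) (f : V → W) : Prop :=
  ∀ p ∈ s, ∀ q ∈ s, G.adj p q → K.adj (f p) (f q)

variable {G : OrientedGraph V} {K : OrientedGraph W}

theorem respectsArcs_comm {p q : V} {x y : W} :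
    G.RespectsArcs K p q x y ↔ G.RespectsArcs K q p y x :=
  and_comm

theorem respectsArcs_of_not_adj {p q : V} (h : ¬G.toSimpleGraph.Adj p q) (x y : W) :
    G.RespectsArcs K p q x y :=
  ⟨fun hpq => (h (Or.inl hpq)).elim, fun hqp => (h (Or.inr hqp)).elim⟩

theorem exists_respectsArcs_iff_signedAdj {p q : V} (h : G.toSimpleGraph.Adj p q) :
    ∃ b, ∀ x y, G.RespectsArcs K p q x y ↔ K.signedAdj b x y := by
  rcases h with h | h
  · exact ⟨true, fun x y => ⟨fun hr => hr.1 h,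
      fun hxy => ⟨fun _ => hxy, fun h' => (G.asymm' p q h h').elim⟩⟩⟩
  · exact ⟨false, fun x y => ⟨fun hr => hr.2 h,
      fun hxy => ⟨fun h' => (G.asymm' q p h h').elim, fun _ => hxy⟩⟩⟩

theorem IsHomOn.mono {s t : Finset V} {f : V → W} (h : G.IsHomOn K t f) (hst : s ⊆ t) :
    G.IsHomOn K s f :=
  fun p hp q hq => h p (hst hp) q (hst hq)

theorem IsHomOn.congr {s : Finset V} {f g : V → W} (h : G.IsHomOn K s f)
    (hfg : ∀ x ∈ s, f x = g x) : G.IsHomOn K s g := by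
  intro p hp q hq hpq
  rw [← hfg p hp, ← hfg q hq]
  exact h p hp q hq hpq

theorem isHomOn_of_respectsArcs [DecidableEq V] {s D : Finset V} {g : V → W}
    (hout : G.IsHomOn K (s \ D) g)
    (hin : ∀ p ∈ D, ∀ q ∈ s, G.toSimpleGraph.Adj p q → G.RespectsArcs K p q (g p) (g q)) :
    G.IsHomOn K s g := by
  intro p hp q hq hpq
  by_cases hpD : p ∈ D
  · exact (hin p hpD q hq (Or.inl hpq)).1 hpq
  by_cases hqD : q ∈ D
  · exact (hin q hqD p hp (Or.inr hpq)).2 hpq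
  exact hout p (mem_sdiff.2 ⟨hp, hpD⟩) q (mem_sdiff.2 ⟨hq, hqD⟩) hpq

theorem IsHomOn.isHom [Fintype V] {f : V → W} (h : G.IsHomOn K univ f) : G.IsHom K f :=
  fun p q => h p (mem_univ p) q (mem_univ q)

theorem exists_finset_signedAdj (hdeg : ∀ b x, 6 ≤ {y | K.signedAdj b x y}.ncard)
    (b : Bool) (x : W) : ∃ L : Finset W, 6 ≤ #L ∧ ∀ y ∈ L, K.signedAdj b x y := by
  have hfin : {y | K.signedAdj b x y}.Finite := Set.finite_of_ncard_pos (by have := hdeg b x; omega)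
  exact ⟨hfin.toFinset, by rw [← Set.ncard_eq_toFinset_card _ hfin]; exact hdeg b x, by simp⟩

theorem exists_mem_forall_exists_signedAdj
    (hbad : ∀ b₁ b₂ x z z', (¬∃ y, K.signedAdj b₁ z y ∧ K.signedAdj b₂ x y) →
      (¬∃ y, K.signedAdj b₁ z' y ∧ K.signedAdj b₂ x y) → z = z')
    {ι : Type*} {T : Finset ι} {L : Finset W} (hTL : #T < #L) (b₁ b₂ : ι → Bool) (c : ι → W) :
    ∃ x ∈ L, ∀ i ∈ T, ∃ y, K.signedAdj (b₁ i) x y ∧ K.signedAdj (b₂ i) (c i) y := by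
  by_contra! hL
  have : Nonempty ι := by
    obtain ⟨x, hx⟩ := card_pos.1 (by omega : 0 < #L)
    obtain ⟨i, -, -⟩ := hL x hx
    exact ⟨i⟩
  choose! i hiT hi using hL
  have hinj : Set.InjOn i L := fun x hx x' hx' hxx' =>
    hbad _ _ _ x x' (not_exists.2 fun y hy => hi x hx y hy.1 hy.2)
      (not_exists.2 fun y hy => hi x' hx' y (hxx' ▸ hy.1) (hxx' ▸ hy.2))
  exact absurd (card_le_card_of_injOn i hiT hinj) (not_le.2 hTL)

theorem exists_isHomOn_of_star [DecidableEq V]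
    (hbad : ∀ b₁ b₂ x z z', (¬∃ y, K.signedAdj b₁ z y ∧ K.signedAdj b₂ x y) →
      (¬∃ y, K.signedAdj b₁ z' y ∧ K.signedAdj b₂ x y) → z = z')
    {s T : Finset V} {u : V} {f : V → W} {L : Finset W}
    (hT : ∀ w ∈ T, G.toSimpleGraph.Adj u w ∧ ∃ z ∈ s \ insert u T, G.toSimpleGraph.Adj w z ∧
      ∀ q ∈ s, G.toSimpleGraph.Adj w q → q = u ∨ q = z)
    (hf : G.IsHomOn K (s \ insert u T) f) (hTL : #T < #L)
    (hL : ∀ x ∈ L, ∀ y ∈ s \ insert u T, G.RespectsArcs K y u (f y) x) :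
    ∃ g, G.IsHomOn K s g := by
  choose! z hz hwz hzonly using fun w hw => (hT w hw).2
  choose! b₁ hb₁ using fun w hw => exists_respectsArcs_iff_signedAdj (K := K) (hT w hw).1
  choose! b₂ hb₂ using fun w hw => exists_respectsArcs_iff_signedAdj (K := K) (hwz w hw).symm
  obtain ⟨x, hxL, hx⟩ := exists_mem_forall_exists_signedAdj hbad hTL b₁ b₂ (fun w => f (z w))
  have : Nonempty W := ⟨x⟩
  choose! y hy₁ hy₂ using hx
  have huT : u ∉ T := fun h => (hT u h).1.ne rfl
  refine ⟨fun v => if v = u then x else if v ∈ T then y v else f v,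
    isHomOn_of_respectsArcs (D := insert u T) (hf.congr fun v hv => ?_) fun p hp q hq hpq => ?_⟩
  · obtain ⟨hvu, hvT⟩ := not_or.1 (mem_insert.not.1 (mem_sdiff.1 hv).2)
    simp [hvu, hvT]
  rcases mem_insert.1 hp with rfl | hpT
  · by_cases hqT : q ∈ T
    · simpa [hqT, hpq.ne'] using (hb₁ q hqT _ _).2 (hy₁ q hqT)
    · have hq' : q ∈ s \ insert p T := by simp [hq, hqT, hpq.ne']
      simpa [hqT, hpq.ne'] using respectsArcs_comm.1 (hL x hxL q hq')
  · have hpu : p ≠ u := fun h => huT (h ▸ hpT)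
    rcases hzonly p hpT q hq hpq with rfl | rfl
    · simpa [hpu, hpT] using respectsArcs_comm.1 ((hb₁ p hpT _ _).2 (hy₁ p hpT))
    · obtain ⟨hzu, hzT⟩ := not_or.1 (mem_insert.not.1 (mem_sdiff.1 (hz p hpT)).2)
      simpa [hpu, hpT, hzu, hzT] using respectsArcs_comm.1 ((hb₂ p hpT _ _).2 (hy₂ p hpT))

theorem exists_finset_respectsArcs_of_card_le_one
    (hdeg : ∀ b x, 6 ≤ {y | K.signedAdj b x y}.ncard) {R : Finset V} {u : V} (f : V → W)
    (hR : #R ≤ 1) (hRu : ∀ y ∈ R, G.toSimpleGraph.Adj y u) :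
    ∃ L : Finset W, 6 ≤ #L ∧ ∀ x ∈ L, ∀ y ∈ R, G.RespectsArcs K y u (f y) x := by
  rcases Nat.le_one_iff_eq_zero_or_eq_one.1 hR with hR | hR
  · obtain ⟨L, hL6, -⟩ := exists_finset_signedAdj hdeg true (f u)
    exact ⟨L, hL6, by simp [card_eq_zero.1 hR]⟩
  · obtain ⟨y, rfl⟩ := card_eq_one.1 hR
    obtain ⟨b, hb⟩ := exists_respectsArcs_iff_signedAdj (K := K) (hRu y (mem_singleton_self y))
    obtain ⟨L, hL6, hL⟩ := exists_finset_signedAdj hdeg b (f y)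
    refine ⟨L, hL6, fun x hx y' hy' => ?_⟩
    rw [mem_singleton.1 hy']
    exact (hb _ _).2 (hL x hx)

theorem exists_finset_respectsArcs_of_card_eq_two
    (hpair : ∀ b₁ b₂ x₁ x₂ y, K.signedAdj b₁ x₁ y → K.signedAdj b₂ x₂ y →
      ∃ y', y' ≠ y ∧ K.signedAdj b₁ x₁ y' ∧ K.signedAdj b₂ x₂ y')
    {R : Finset V} {u : V} {f : V → W} (hR : #R = 2) (hRu : ∀ y ∈ R, G.toSimpleGraph.Adj y u)
    (hfu : ∀ y ∈ R, G.RespectsArcs K y u (f y) (f u)) :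
    ∃ L : Finset W, 2 ≤ #L ∧ ∀ x ∈ L, ∀ y ∈ R, G.RespectsArcs K y u (f y) x := by
  classical
  obtain ⟨y₁, y₂, -, rfl⟩ := card_eq_two.1 hR
  have hy₁ : y₁ ∈ ({y₁, y₂} : Finset V) := mem_insert_self _ _
  have hy₂ : y₂ ∈ ({y₁, y₂} : Finset V) := mem_insert_of_mem (mem_singleton_self _)
  obtain ⟨b₁, hb₁⟩ := exists_respectsArcs_iff_signedAdj (K := K) (hRu y₁ hy₁)
  obtain ⟨b₂, hb₂⟩ := exists_respectsArcs_iff_signedAdj (K := K) (hRu y₂ hy₂)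
  obtain ⟨x, hxu, hx₁, hx₂⟩ :=
    hpair b₁ b₂ _ _ _ ((hb₁ _ _).1 (hfu y₁ hy₁)) ((hb₂ _ _).1 (hfu y₂ hy₂))
  refine ⟨{x, f u}, (card_pair hxu).ge, fun x' hx' y hy => ?_⟩
  rcases mem_insert.1 hx' with rfl | hx'
  · rcases mem_insert.1 hy with rfl | hy
    · exact (hb₁ _ _).2 hx₁
    · exact mem_singleton.1 hy ▸ (hb₂ _ _).2 hx₂
  · exact mem_singleton.1 hx' ▸ hfu y hy

theorem exists_isHomOn_of_isReducibleStar [DecidableEq V] [DecidableRel G.toSimpleGraph.Adj]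
    (hdeg : ∀ b x, 6 ≤ {y | K.signedAdj b x y}.ncard)
    (hpair : ∀ b₁ b₂ x₁ x₂ y, K.signedAdj b₁ x₁ y → K.signedAdj b₂ x₂ y →
      ∃ y', y' ≠ y ∧ K.signedAdj b₁ x₁ y' ∧ K.signedAdj b₂ x₂ y')
    (hbad : ∀ b₁ b₂ x z z', (¬∃ y, K.signedAdj b₁ z y ∧ K.signedAdj b₂ x y) →
      (¬∃ y, K.signedAdj b₁ z' y ∧ K.signedAdj b₂ x y) → z = z')
    {s T : Finset V} {u : V} (hstar : G.toSimpleGraph.IsReducibleStar s u T)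
    (ih : ∀ t ⊂ s, ∃ f, G.IsHomOn K t f) : ∃ g, G.IsHomOn K s g := by
  obtain ⟨hu, hTs, hT, hcount, hRT⟩ := hstar
  set R := {y ∈ s | G.toSimpleGraph.Adj u y} \ T
  have hRu : ∀ y ∈ R, G.toSimpleGraph.Adj y u := fun y hy =>
    (mem_filter.1 (mem_sdiff.1 hy).1).2.symm
  suffices ∃ f, G.IsHomOn K (s \ insert u T) f ∧
      ∃ L : Finset W, #T < #L ∧ ∀ x ∈ L, ∀ y ∈ R, G.RespectsArcs K y u (f y) x by
    obtain ⟨f, hf, L, hTL, hL⟩ := this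
    refine exists_isHomOn_of_star hbad (fun w hw => ⟨(mem_filter.1 (hTs hw)).2, hT w hw⟩) hf hTL
      fun x hx y hy => ?_
    by_cases huy : G.toSimpleGraph.Adj u y
    · obtain ⟨hys, hyuT⟩ := mem_sdiff.1 hy
      exact hL x hx y (by simp [R, hys, huy, (not_or.1 (mem_insert.not.1 hyuT)).2])
    · exact respectsArcs_of_not_adj (fun h => huy h.symm) _ _
  rcases Nat.lt_or_ge #R 2 with hR | hR
  · obtain ⟨f, hf⟩ := ih (s \ insert u T) (sdiff_ssubset
      (insert_subset hu fun w hw => (mem_filter.1 (hTs hw)).1) ⟨u, mem_insert_self u T⟩)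
    obtain ⟨L, hL6, hL⟩ := exists_finset_respectsArcs_of_card_le_one hdeg f (by omega) hRu
    exact ⟨f, hf, L, by omega, hL⟩
  · -- delete only a vertex of `T`, so that the colour of `u` is a common neighbour for `R`
    obtain ⟨v, hv⟩ := card_pos.1 (by omega : 0 < #T)
    obtain ⟨hvs, huv⟩ := mem_filter.1 (hTs hv)
    obtain ⟨f, hf⟩ := ih (s.erase v) (erase_ssubset hvs)
    have hu' : u ∈ s.erase v := mem_erase.2 ⟨huv.ne, hu⟩
    have hfu : ∀ y ∈ R, G.RespectsArcs K y u (f y) (f u) := by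
      intro y hy
      obtain ⟨hys, hyT⟩ := mem_sdiff.1 hy
      have hy' : y ∈ s.erase v := mem_erase.2 ⟨fun h => hyT (h ▸ hv), (mem_filter.1 hys).1⟩
      exact ⟨hf y hy' u hu', hf u hu' y hy'⟩
    obtain ⟨L, hL2, hL⟩ := exists_finset_respectsArcs_of_card_eq_two hpair (by omega) hRu hfu
    refine ⟨f, hf.mono fun w hw => mem_erase.2 ⟨?_, (mem_sdiff.1 hw).1⟩, L, by omega, hL⟩
    rintro rfl
    exact (mem_sdiff.1 hw).2 (mem_insert_of_mem hv)

theorem exists_isHom_of_madLT3 [Fintype V] [Nonempty W]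
    (hdeg : ∀ b x, 6 ≤ {y | K.signedAdj b x y}.ncard)
    (hpair : ∀ b₁ b₂ x₁ x₂ y, K.signedAdj b₁ x₁ y → K.signedAdj b₂ x₂ y →
      ∃ y', y' ≠ y ∧ K.signedAdj b₁ x₁ y' ∧ K.signedAdj b₂ x₂ y')
    (hbad : ∀ b₁ b₂ x z z', (¬∃ y, K.signedAdj b₁ z y ∧ K.signedAdj b₂ x y) →
      (¬∃ y, K.signedAdj b₁ z' y ∧ K.signedAdj b₂ x y) → z = z')
    (hG : MadLT3 G.toSimpleGraph) : ∃ f, G.IsHom K f := by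
  classical
  suffices ∀ s : Finset V, ∃ f, G.IsHomOn K s f from
    (this univ).imp fun _ hf => hf.isHom
  intro s
  induction s using Finset.strongInduction with
  | H s ih =>
    rcases s.eq_empty_or_nonempty with rfl | hs
    · exact ⟨fun _ => Classical.arbitrary W, by simp [IsHomOn]⟩
    · obtain ⟨u, T, hstar⟩ := G.toSimpleGraph.exists_isReducibleStar hG hs
      exact exists_isHomOn_of_isReducibleStar hdeg hpair hbad hstar ih

end OrientedGraph

instance : DecidableRel Pal7.adj := fun i j =>
  inferInstanceAs (Decidable (j - i = 1 ∨ j - i = 2 ∨ j - i = 4))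

theorem Pal7.six_le_ncard_signedAdj_antiTwin (b : Bool) (x : ZMod 7 × Bool) :
    6 ≤ {y | Pal7.antiTwin.signedAdj b x y}.ncard := by
  rw [Set.ncard_eq_toFinset_card', Set.toFinset_ofPred]
  revert b x
  decide

theorem Pal7.exists_ne_signedAdj_antiTwin : ∀ b₁ b₂ (x₁ x₂ y : ZMod 7 × Bool),
    Pal7.antiTwin.signedAdj b₁ x₁ y → Pal7.antiTwin.signedAdj b₂ x₂ y →
    ∃ y', y' ≠ y ∧ Pal7.antiTwin.signedAdj b₁ x₁ y' ∧ Pal7.antiTwin.signedAdj b₂ x₂ y' := by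
  decide

theorem Pal7.eq_of_not_exists_signedAdj_antiTwin : ∀ b₁ b₂ (x z z' : ZMod 7 × Bool),
    (¬∃ y, Pal7.antiTwin.signedAdj b₁ z y ∧ Pal7.antiTwin.signedAdj b₂ x y) →
    (¬∃ y, Pal7.antiTwin.signedAdj b₁ z' y ∧ Pal7.antiTwin.signedAdj b₂ x y) → z = z' := by
  decide

/-- Every oriented graph whose underlying graph has maximum average degree `< 3`
admits a pushable homomorphism to `Pal7`. -/
theorem mad_lt_three_pushableHom_pal7
    (V : Type) [Fintype V] (G : OrientedGraph V)
    (hmad : MadLT3 G.toSimpleGraph) :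
    ∃ f : V → ZMod 7, G.IsPushableHom Pal7 f := by
  obtain ⟨f, hf⟩ := G.exists_isHom_of_madLT3 Pal7.six_le_ncard_signedAdj_antiTwin
    Pal7.exists_ne_signedAdj_antiTwin Pal7.eq_of_not_exists_signedAdj_antiTwin hmad
  exact ⟨_, hf.isPushableHom_fst⟩
end

section
/- Let H→ be an oriented graph whose underlying graph H satisfies mad(H) < 3, suppose H→ admits no pushable homomorphism to the Paley tournament Pal_7, and suppose every oriented graph with strictly fewer vertices whose underlying graph has maximum average degree less than 3 does admit a pushable homomorphism to Pal_7. Then every vertex of H has degree at least 2, and every neighbor of a vertex of degree 2 in H has degree at least 4. -/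
/-!
Delete a vertex `v` of degree at most two. By minimality `H - v` has a pushable homomorphism to
`Pal7`, recorded as a colouring `f` together with push signs `σ`, and it remains to extend it
to `v`. Every vertex of `Pal7` has an in- and an out-neighbour, which settles degree at most one.
If `v` has degree two with neighbours `u` and `w`, then, since two distinct vertices of `Pal7`
have a common neighbour with any prescribed signs, `v` can be coloured as soon as `f u ≠ f w`.
When `w` has at most two neighbours besides `v`, this is arranged by recolouring (and possibly
pushing) `w`: once pushing is allowed, two vertices of `Pal7` with a common signed neighbour
have at least two of them, and one of these differs from `f u`.
-/

theorem Set.exists_subset_pair_of_ncard_le_two {α : Type*} {s : Set α} (h₁ : 1 ≤ s.ncard)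
    (h₂ : s.ncard ≤ 2) : ∃ a ∈ s, ∃ b ∈ s, s ⊆ {a, b} := by
  rcases (by omega : s.ncard = 1 ∨ s.ncard = 2) with h | h
  · obtain ⟨a, rfl⟩ := Set.ncard_eq_one.mp h
    exact ⟨a, rfl, a, rfl, by simp⟩
  · obtain ⟨a, b, -, rfl⟩ := Set.ncard_eq_two.mp h
    exact ⟨a, by simp, b, by simp, subset_rfl⟩

theorem Set.exists_ne_subset_pair_of_ncard_eq_two {α : Type*} {s : Set α} {w : α}
    (h : s.ncard = 2) (hw : w ∈ s) : ∃ u ≠ w, s ⊆ {u, w} := by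
  obtain ⟨a, b, hab, rfl⟩ := Set.ncard_eq_two.mp h
  rcases hw with rfl | rfl
  · exact ⟨b, hab.symm, (Set.pair_comm _ _).subset⟩
  · exact ⟨a, hab, subset_rfl⟩

theorem MadLT3.of_injective {V W : Type*} {G : SimpleGraph V} {G' : SimpleGraph W} (φ : G →g G')
    (hφ : Function.Injective φ) (h : MadLT3 G') : MadLT3 G := by
  intro K hK
  have hverts : (K.map φ).verts.ncard = K.verts.ncard := Set.ncard_image_of_injective _ hφ
  have hedges : (K.map φ).edgeSet.ncard = K.edgeSet.ncard := by
    rw [SimpleGraph.Subgraph.edgeSet_map, Set.ncard_image_of_injective _ (Sym2.map.injective hφ)]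
  simpa only [hverts, hedges] using h (K.map φ) (hK.image φ)

namespace OrientedGraph

variable {V W : Type*} {G : OrientedGraph V} {K : OrientedGraph W}

theorem signedAdj_comm {t : Bool} {u w : V} : G.signedAdj t u w ↔ G.signedAdj (!t) w u := by
  cases t <;> rfl

theorem toSimpleGraph_adj_of_signedAdj {t : Bool} {u w : V} (h : G.signedAdj t u w) :
    G.toSimpleGraph.Adj u w := by
  cases t
  · exact Or.inr h
  · exact Or.inl h

theorem exists_signedAdj_of_adj {u w : V} (h : G.toSimpleGraph.Adj u w) :
    ∃ t, G.signedAdj t u w :=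
  h.elim (fun h => ⟨true, h⟩) (fun h => ⟨false, h⟩)

theorem eq_of_signedAdj {s t : Bool} {u w : V} (hs : G.signedAdj s u w)
    (ht : G.signedAdj t u w) : s = t := by
  cases s <;> cases t
  all_goals first | rfl | exact absurd ht (G.asymm' _ _ hs)

theorem exists_forall_signedAdj_eq (u w : V) : ∃ a, ∀ t, G.signedAdj t u w → t = a := by
  by_cases h : G.toSimpleGraph.Adj u w
  · obtain ⟨a, ha⟩ := exists_signedAdj_of_adj h
    exact ⟨a, fun t ht => eq_of_signedAdj ht ha⟩
  · exact ⟨true, fun t ht => absurd (toSimpleGraph_adj_of_signedAdj ht) h⟩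

theorem signedAdj_push {σ : V → Bool} {t : Bool} {u w : V} :
    (G.push {x | σ x}).signedAdj t u w ↔ G.signedAdj (t ^^ σ u ^^ σ w) u w := by
  cases t <;> cases hu : σ u <;> cases hw : σ w <;> simp [signedAdj, push, hu, hw]

theorem isHom_iff_signedAdj {f : V → W} :
    G.IsHom K f ↔ ∀ t u w, G.signedAdj t u w → K.signedAdj t (f u) (f w) := by
  refine ⟨fun h t u w huw => ?_, fun h => h true⟩
  cases t
  · exact h w u huw
  · exact h u w huw

/-- `σ x` records whether `x` is pushed: an arc `xy` is reversed iff `σ x ≠ σ y`. -/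
def IsSignedHomOn (G : OrientedGraph V) (K : OrientedGraph W) (A : Set V) (σ : V → Bool)
    (f : V → W) : Prop :=
  ∀ x ∈ A, ∀ y ∈ A, ∀ t, G.signedAdj t x y → K.signedAdj (t ^^ σ x ^^ σ y) (f x) (f y)

theorem isPushableHom_iff {f : V → W} :
    G.IsPushableHom K f ↔ ∃ σ, G.IsSignedHomOn K Set.univ σ f := by
  classical
  simp only [IsPushableHom, IsSignedHomOn, isHom_iff_signedAdj, Set.mem_univ, true_implies]
  constructor
  · rintro ⟨S, hS⟩
    refine ⟨fun x => decide (x ∈ S), fun x y t h => hS _ x y ?_⟩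
    have hS : S = {x | decide (x ∈ S)} := by ext; simp
    rw [hS, signedAdj_push]
    simpa [Bool.xor_assoc, Bool.xor_left_comm] using h
  · rintro ⟨σ, hσ⟩
    refine ⟨{x | σ x}, fun t x y h => ?_⟩
    simpa [Bool.xor_assoc, Bool.xor_left_comm] using hσ x y _ (signedAdj_push.mp h)

def induce (G : OrientedGraph V) (s : Set V) : OrientedGraph s where
  adj x y := G.adj x y
  irrefl' x := G.irrefl' x
  asymm' x y := G.asymm' x y

theorem madLT3_induce (h : MadLT3 G.toSimpleGraph) (s : Set V) :
    MadLT3 (G.induce s).toSimpleGraph :=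
  h.of_injective ⟨Subtype.val, id⟩ Subtype.val_injective

theorem signedAdj_induce {s : Set V} {t : Bool} {x y : s} :
    (G.induce s).signedAdj t x y ↔ G.signedAdj t x y := by
  cases t <;> rfl

theorem exists_isSignedHomOn_of_isPushableHom_induce [Inhabited W] {s : Set V} {f : s → W}
    (hf : (G.induce s).IsPushableHom K f) : ∃ σ g, G.IsSignedHomOn K s σ g := by
  obtain ⟨σ, hσ⟩ := isPushableHom_iff.mp hf
  refine ⟨Function.extend Subtype.val σ default, Function.extend Subtype.val f default, ?_⟩
  intro x hx y hy t h
  lift x to s using hx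
  lift y to s using hy
  simpa only [Subtype.val_injective.extend_apply] using
    hσ x trivial y trivial t (signedAdj_induce.mpr h)

variable {σ : V → Bool} {f : V → W}

theorem IsSignedHomOn.update [DecidableEq V] {A : Set V} (hf : G.IsSignedHomOn K A σ f)
    {w : V} {s : Bool} {c : W}
    (hc : ∀ x ∈ A, x ≠ w → ∀ t, G.signedAdj t x w → K.signedAdj (t ^^ σ x ^^ s) (f x) c) :
    G.IsSignedHomOn K (insert w A) (Function.update σ w s) (Function.update f w c) := by
  rintro x hx y hy t hxy
  rcases eq_or_ne x w with rfl | hxw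
  · rcases eq_or_ne y x with rfl | hyx
    · exact absurd (toSimpleGraph_adj_of_signedAdj hxy) (G.toSimpleGraph.irrefl)
    rw [signedAdj_comm] at hxy ⊢
    simp only [Function.update_self, Function.update_of_ne hyx]
    convert hc y (hy.resolve_left hyx) hyx _ hxy using 2
    cases t <;> cases s <;> simp
  rcases eq_or_ne y w with rfl | hyw
  · simpa only [Function.update_self, Function.update_of_ne hxw] using
      hc x (hx.resolve_left hxw) hxw t hxy
  · simpa only [Function.update_of_ne hxw, Function.update_of_ne hyw] using
      hf x (hx.resolve_left hxw) y (hy.resolve_left hyw) t hxy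

theorem IsSignedHomOn.isPushableHom_update [DecidableEq V] {v : V}
    (hf : G.IsSignedHomOn K {v}ᶜ σ f) {c : W}
    (hc : ∀ x ∈ G.toSimpleGraph.neighborSet v, ∀ t, G.signedAdj t x v →
      K.signedAdj (t ^^ σ x) (f x) c) :
    G.IsPushableHom K (Function.update f v c) := by
  refine isPushableHom_iff.mpr ⟨Function.update σ v false, ?_⟩
  rw [← Set.union_compl_self {v}, ← Set.insert_eq]
  simpa using hf.update (s := false) fun x _ _ t h =>
    by simpa using hc x (toSimpleGraph_adj_of_signedAdj h).symm t h

theorem IsSignedHomOn.exists_isPushableHom_of_ncard_le_one [Finite V]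
    (hK : ∀ x t, ∃ c, K.signedAdj t x c) {v : V} (hf : G.IsSignedHomOn K {v}ᶜ σ f)
    (hv : (G.toSimpleGraph.neighborSet v).ncard ≤ 1) : ∃ g, G.IsPushableHom K g := by
  classical
  have : Nonempty V := ⟨v⟩
  obtain ⟨u, hu⟩ := (Set.ncard_le_one_iff_subset_singleton (Set.toFinite _)).mp hv
  obtain ⟨a, ha⟩ := G.exists_forall_signedAdj_eq u v
  obtain ⟨c, hc⟩ := hK (f u) (a ^^ σ u)
  refine ⟨_, hf.isPushableHom_update (c := c) fun x hx t ht => ?_⟩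
  obtain rfl := hu hx
  rwa [ha t ht]

theorem IsSignedHomOn.exists_isPushableHom_of_neighborSet_subset_pair
    (hK : ∀ x y, x ≠ y → ∀ s t, ∃ c, K.signedAdj s x c ∧ K.signedAdj t y c)
    {v : V} (hf : G.IsSignedHomOn K {v}ᶜ σ f) {u w : V}
    (hv : G.toSimpleGraph.neighborSet v ⊆ {u, w}) (huw : f u ≠ f w) :
    ∃ g, G.IsPushableHom K g := by
  classical
  obtain ⟨a, ha⟩ := G.exists_forall_signedAdj_eq u v
  obtain ⟨b, hb⟩ := G.exists_forall_signedAdj_eq w v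
  obtain ⟨c, hcu, hcw⟩ := hK (f u) (f w) huw (a ^^ σ u) (b ^^ σ w)
  refine ⟨_, hf.isPushableHom_update (c := c) fun x hx t ht => ?_⟩
  rcases hv hx with rfl | rfl
  · rwa [ha t ht]
  · rwa [hb t ht]

theorem IsSignedHomOn.exists_update_ne [DecidableEq V]
    (hK : ∀ x₁ x₂ z y t₁ t₂, K.signedAdj t₁ x₁ z → K.signedAdj t₂ x₂ z →
      ∃ c ≠ y, ∃ b, K.signedAdj (t₁ ^^ b) x₁ c ∧ K.signedAdj (t₂ ^^ b) x₂ c)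
    {A : Set V} (hf : G.IsSignedHomOn K A σ f) {w u₁ u₂ : V} (hw : w ∈ A)
    (hu₁ : u₁ ∈ G.toSimpleGraph.neighborSet w ∩ A) (hu₂ : u₂ ∈ G.toSimpleGraph.neighborSet w ∩ A)
    (hN : G.toSimpleGraph.neighborSet w ∩ A ⊆ {u₁, u₂}) (y : W) :
    ∃ s, ∃ c ≠ y, G.IsSignedHomOn K A (Function.update σ w s) (Function.update f w c) := by
  obtain ⟨t₁, ht₁⟩ := exists_signedAdj_of_adj hu₁.1.symm
  obtain ⟨t₂, ht₂⟩ := exists_signedAdj_of_adj hu₂.1.symm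
  obtain ⟨c, hcy, b, hc₁, hc₂⟩ :=
    hK _ _ _ y _ _ (hf u₁ hu₁.2 w hw t₁ ht₁) (hf u₂ hu₂.2 w hw t₂ ht₂)
  refine ⟨σ w ^^ b, c, hcy, ?_⟩
  rw [← Set.insert_eq_of_mem hw]
  refine hf.update fun x hx _ t ht => ?_
  rcases hN ⟨(toSimpleGraph_adj_of_signedAdj ht).symm, hx⟩ with rfl | rfl
  · rw [eq_of_signedAdj ht ht₁]
    simpa [Bool.xor_assoc] using hc₁
  · rw [eq_of_signedAdj ht ht₂]
    simpa [Bool.xor_assoc] using hc₂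

theorem IsSignedHomOn.exists_isPushableHom_of_ncard_eq_two [Finite V]
    (hK₂ : ∀ x y, x ≠ y → ∀ s t, ∃ c, K.signedAdj s x c ∧ K.signedAdj t y c)
    (hK₃ : ∀ x₁ x₂ z y t₁ t₂, K.signedAdj t₁ x₁ z → K.signedAdj t₂ x₂ z →
      ∃ c ≠ y, ∃ b, K.signedAdj (t₁ ^^ b) x₁ c ∧ K.signedAdj (t₂ ^^ b) x₂ c)
    {v w : V} (hf : G.IsSignedHomOn K {v}ᶜ σ f)
    (hv : (G.toSimpleGraph.neighborSet v).ncard = 2) (hvw : G.toSimpleGraph.Adj v w)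
    (hw₂ : 2 ≤ (G.toSimpleGraph.neighborSet w).ncard)
    (hw₃ : (G.toSimpleGraph.neighborSet w).ncard ≤ 3) : ∃ g, G.IsPushableHom K g := by
  classical
  obtain ⟨u, huw, hNv⟩ := Set.exists_ne_subset_pair_of_ncard_eq_two hv hvw
  have hNw := Set.ncard_sdiff_singleton_of_mem (s := G.toSimpleGraph.neighborSet w) hvw.symm
  obtain ⟨u₁, hu₁, u₂, hu₂, hN⟩ :=
    Set.exists_subset_pair_of_ncard_le_two (s := G.toSimpleGraph.neighborSet w \ {v})
      (by omega) (by omega)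
  obtain ⟨s, c, hcu, hf'⟩ := hf.exists_update_ne hK₃ hvw.ne' hu₁ hu₂ hN (f u)
  exact hf'.exists_isPushableHom_of_neighborSet_subset_pair hK₂ hNv
    (by simpa [huw] using hcu.symm)

end OrientedGraph

namespace Pal7

instance (t : Bool) (x y : ZMod 7) : Decidable (Pal7.signedAdj t x y) := by
  cases t <;> unfold OrientedGraph.signedAdj Pal7 <;> infer_instance

theorem exists_signedAdj : ∀ (x : ZMod 7) (t : Bool), ∃ c, Pal7.signedAdj t x c := by
  decide

theorem exists_common_signedAdj :
    ∀ x y : ZMod 7, x ≠ y → ∀ s t : Bool, ∃ c, Pal7.signedAdj s x c ∧ Pal7.signedAdj t y c := by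
  decide

theorem exists_pushed_common_signedAdj_ne : ∀ (x₁ x₂ z y : ZMod 7) (t₁ t₂ : Bool),
    Pal7.signedAdj t₁ x₁ z → Pal7.signedAdj t₂ x₂ z →
    ∃ c ≠ y, ∃ b, Pal7.signedAdj (t₁ ^^ b) x₁ c ∧ Pal7.signedAdj (t₂ ^^ b) x₂ c := by
  decide

end Pal7

/-- If `H` is a minimum counterexample among oriented graphs with mad `< 3` to
admitting a pushable homomorphism to `Pal7`, then `H` has minimum degree at least
`2` and every neighbor of a degree-`2` vertex has degree at least `4`. -/
theorem mad_min_counterexample_degrees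
    (V : Type) [Fintype V] (H : OrientedGraph V)
    (hmad : MadLT3 H.toSimpleGraph)
    (hno : ¬ ∃ f : V → ZMod 7, H.IsPushableHom Pal7 f)
    (hmin : ∀ (W : Type) [Fintype W] (G : OrientedGraph W),
      Fintype.card W < Fintype.card V → MadLT3 G.toSimpleGraph →
      ∃ f : W → ZMod 7, G.IsPushableHom Pal7 f) :
    (∀ v, 2 ≤ (H.toSimpleGraph.neighborSet v).ncard) ∧
    (∀ v w, (H.toSimpleGraph.neighborSet v).ncard = 2 →
      H.toSimpleGraph.Adj v w → 4 ≤ (H.toSimpleGraph.neighborSet w).ncard) := by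
  classical
  have hdel : ∀ v, ∃ σ f, H.IsSignedHomOn Pal7 {v}ᶜ σ f := fun v => by
    obtain ⟨f, hf⟩ := hmin _ (H.induce {v}ᶜ) (Fintype.card_subtype_lt (x := v) (by simp))
      (H.madLT3_induce hmad _)
    exact OrientedGraph.exists_isSignedHomOn_of_isPushableHom_induce hf
  have hdeg : ∀ v, 2 ≤ (H.toSimpleGraph.neighborSet v).ncard := fun v => by
    by_contra! h
    obtain ⟨σ, f, hf⟩ := hdel v
    exact hno (hf.exists_isPushableHom_of_ncard_le_one Pal7.exists_signedAdj (by omega))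
  refine ⟨hdeg, fun v w hv hvw => ?_⟩
  by_contra! hw
  obtain ⟨σ, f, hf⟩ := hdel v
  exact hno (hf.exists_isPushableHom_of_ncard_eq_two Pal7.exists_common_signedAdj
    Pal7.exists_pushed_common_signedAdj_ne hv hvw (hdeg w) (by omega))
end
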